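/- arXiv:2502.12679 — 9 statements merged into one kernel-verified Lean document; each statement's English description precedes it below -/
import Mathlib

section
/- Let f : I → ℝ have a primitive F on an interval I, and let φ : [α,β] → I be continuous and differentiable on (α,β). Let J be the closed interval with endpoints φ(α) and φ(β). If (f∘φ)·φ' is Riemann integrable on [α,β] and f is Riemann integrable on J, then ∫_{φ(α)}^{φ(β)} f(x) dx = ∫_α^β f(φ(t))·φ'(t) dt. -/
/-!
Both sides equal `F (φ β) - F (φ α)`. Riemann integrability makes the integrands Lebesgue
integrable, so the fundamental theorem of calculus applies to `F` on `[φ α, φ β] ⊆ I`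
and, through the chain rule on `(α, β)`, to `F ∘ φ` on `[α, β]`.
-/

open MeasureTheory Set Filter Topology intervalIntegral

/-- A function is Riemann integrable on a set (Lebesgue criterion): it is bounded
on the set and continuous (within the set) at almost every point of the set. -/
def RiemannIntegrableOn (f : ℝ → ℝ) (s : Set ℝ) : Prop :=
  (∃ M, ∀ x ∈ s, |f x| ≤ M) ∧
  ∀ᵐ x ∂(volume.restrict s), ContinuousWithinAt f s x

section ContinuityPoints

variable {α β : Type*} [TopologicalSpace α] [MeasurableSpace α] [OpensMeasurableSpace α]
  [PseudoEMetricSpace β] {f : α → β} {s : Set α}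

theorem measurableSet_setOf_mem_and_continuousWithinAt (hs : MeasurableSet s) :
    MeasurableSet {x | x ∈ s ∧ ContinuousWithinAt f s x} := by
  have himage : {x | x ∈ s ∧ ContinuousWithinAt f s x} =
      Subtype.val '' {y : s | ContinuousAt (s.domRestrict f) y} := by
    ext x
    constructor
    · rintro ⟨hxs, hcont⟩
      exact ⟨⟨x, hxs⟩, (continuousWithinAt_iff_continuousAt_domRestrict f hxs).1 hcont, rfl⟩
    · rintro ⟨⟨y, hys⟩, hcont, rfl⟩
      exact ⟨hys, (continuousWithinAt_iff_continuousAt_domRestrict f hys).2 hcont⟩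
  rw [himage]
  exact (MeasurableEmbedding.subtype_coe hs).measurableSet_image.2
    (measurableSet_of_continuousAt _)

theorem aestronglyMeasurable_of_ae_continuousWithinAt [SecondCountableTopologyEither α β]
    {μ : Measure α} (hs : MeasurableSet s)
    (hcont : ∀ᵐ x ∂μ.restrict s, ContinuousWithinAt f s x) :
    AEStronglyMeasurable f (μ.restrict s) := by
  set T := {x | x ∈ s ∧ ContinuousWithinAt f s x}
  have hTs : T ⊆ s := fun x hx => hx.1
  have hsT : s =ᵐ[μ] T := by
    refine ae_eq_set.2 ⟨?_, by simp [sdiff_eq_empty.2 hTs]⟩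
    have hnull : μ {x | ¬(x ∈ s → ContinuousWithinAt f s x)} = 0 :=
      ae_iff.1 ((ae_restrict_iff' hs).1 hcont)
    refine measure_mono_null (fun x hx => ?_) hnull
    exact fun hcontx => hx.2 ⟨hx.1, hcontx hx.1⟩
  rw [Measure.restrict_congr_set hsT]
  have hfT : ContinuousOn f T := fun x hx => hx.2.mono hTs
  exact hfT.aestronglyMeasurable (measurableSet_setOf_mem_and_continuousWithinAt hs)

end ContinuityPoints

theorem RiemannIntegrableOn.integrableOn {f : ℝ → ℝ} {s : Set ℝ} (hs : MeasurableSet s)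
    (hfin : volume s ≠ ⊤) (h : RiemannIntegrableOn f s) : IntegrableOn f s := by
  obtain ⟨⟨M, hM⟩, hcont⟩ := h
  have : Fact (volume s < ⊤) := ⟨hfin.lt_top⟩
  refine ⟨aestronglyMeasurable_of_ae_continuousWithinAt hs hcont, .of_bounded (C := M) ?_⟩
  filter_upwards [self_mem_ae_restrict hs] with x hx
  exact hM x hx

theorem RiemannIntegrableOn.intervalIntegrable {f : ℝ → ℝ} {a b : ℝ}
    (h : RiemannIntegrableOn f (uIcc a b)) : IntervalIntegrable f volume a b :=
  (h.integrableOn measurableSet_uIcc (by simp [uIcc])).intervalIntegrable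

theorem integral_eq_sub_of_hasDerivWithinAt_of_ordConnected {I : Set ℝ} (hI : I.OrdConnected)
    {f F : ℝ → ℝ} (hF : ∀ x ∈ I, HasDerivWithinAt F (f x) I x) {a b : ℝ} (ha : a ∈ I)
    (hb : b ∈ I) (hf : IntervalIntegrable f volume a b) :
    ∫ x in a..b, f x = F b - F a := by
  have hab : uIcc a b ⊆ I := hI.uIcc_subset ha hb
  refine integral_eq_sub_of_hasDeriv_right
    (fun x hx => (hF x (hab hx)).continuousWithinAt.mono hab) (fun x hx => ?_) hf
  have hInhds : I ∈ 𝓝 x := mem_of_superset (Ioo_mem_nhds hx.1 hx.2)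
    (Ioo_subset_Icc_self.trans hab)
  exact ((hF x (mem_of_mem_nhds hInhds)).hasDerivAt hInhds).hasDerivWithinAt

theorem integral_comp_mul_deriv_eq_sub_of_hasDerivWithinAt {I : Set ℝ} {f F φ φ' : ℝ → ℝ}
    {α β : ℝ} (hαβ : α ≤ β) (hF : ∀ x ∈ I, HasDerivWithinAt F (f x) I x)
    (hφI : MapsTo φ (Icc α β) I) (hφc : ContinuousOn φ (Icc α β))
    (hφd : ∀ t ∈ Ioo α β, HasDerivAt φ (φ' t) t)
    (hint : IntervalIntegrable (fun t => f (φ t) * φ' t) volume α β) :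
    ∫ t in α..β, f (φ t) * φ' t = F (φ β) - F (φ α) := by
  have hFc : ContinuousOn F I := fun x hx => (hF x hx).continuousWithinAt
  refine integral_eq_sub_of_hasDerivAt_of_le hαβ (hFc.comp hφc hφI) (fun t ht => ?_) hint
  exact ((hF (φ t) (hφI (Ioo_subset_Icc_self ht))).comp t (hφd t ht).hasDerivWithinAt
    hφI).hasDerivAt (Icc_mem_nhds ht.1 ht.2)

theorem stmt0 (I : Set ℝ) (hI : I.OrdConnected) (f F : ℝ → ℝ)
    (hF : ∀ x ∈ I, HasDerivWithinAt F (f x) I x)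
    (α β : ℝ) (hαβ : α ≤ β) (φ φ' : ℝ → ℝ)
    (hmap : ∀ t ∈ Set.Icc α β, φ t ∈ I)
    (hφc : ContinuousOn φ (Set.Icc α β))
    (hφd : ∀ t ∈ Set.Ioo α β, HasDerivAt φ (φ' t) t)
    (hprod : RiemannIntegrableOn (fun t => f (φ t) * φ' t) (Set.Icc α β))
    (hfJ : RiemannIntegrableOn f (Set.uIcc (φ α) (φ β))) :
    ∫ x in (φ α)..(φ β), f x = ∫ t in α..β, f (φ t) * φ' t := by
  rw [← uIcc_of_le hαβ] at hprod
  rw [integral_eq_sub_of_hasDerivWithinAt_of_ordConnected hI hF (hmap α ⟨le_rfl, hαβ⟩)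
      (hmap β ⟨hαβ, le_rfl⟩) hfJ.intervalIntegrable,
    integral_comp_mul_deriv_eq_sub_of_hasDerivWithinAt hαβ hF hmap hφc hφd
      hprod.intervalIntegrable]
end

section
/- Let φ : ℝ → ℝ be an arbitrary function that has a (finite or infinite) derivative at every point of a set M ⊆ ℝ. If the image φ(M) has Lebesgue measure zero, then φ'(t) = 0 for almost every t ∈ M. -/
/-!
At a point of `M` where the derivative, finite or infinite, is not zero, `φ` is locally
expanding: `|x - t| ≤ K |φ x - φ t|` for `x` near `t`. Sorting these points by `K` and by the
size of that neighbourhood gives countably many classes. Near each of its points a class is a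
set on which `φ` is `K`-antilipschitz, so its measure is at most `K` times that of its image,
which is null.
-/

open MeasureTheory Set Filter Topology intervalIntegral

open Asymptotics Metric
open scoped NNReal ENNReal

section Slope

variable {𝕜 : Type*} [NontriviallyNormedField 𝕜] {f : 𝕜 → 𝕜} {t : 𝕜}

theorem isBigO_sub_of_eventually_le_norm_slope {c : ℝ} (hc : 0 < c)
    (h : ∀ᶠ x in 𝓝[≠] t, c ≤ ‖slope f t x‖) : (· - t) =O[𝓝 t] (f · - f t) := by
  rw [← nhdsNE_sup_pure t]
  refine IsBigO.sup (IsBigO.of_bound c⁻¹ ?_) (isBigO_pure.2 fun _ => sub_self t)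
  filter_upwards [h, self_mem_nhdsWithin] with x hx hxt
  have hxt : 0 < ‖x - t‖ := norm_pos_iff.2 (sub_ne_zero.2 hxt)
  rw [slope_def_field, norm_div, le_div_iff₀ hxt] at hx
  rwa [le_inv_mul_iff₀ hc]

theorem HasDerivAt.isBigO_sub_rev {d : 𝕜} (hf : HasDerivAt f d t) (hd : d ≠ 0) :
    (· - t) =O[𝓝 t] (f · - f t) :=
  isBigO_sub_of_eventually_le_norm_slope (half_pos (norm_pos_iff.2 hd)) <|
    (hasDerivAt_iff_tendsto_slope.1 hf).norm.eventually_const_le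
      (half_lt_self (norm_pos_iff.2 hd))

theorem isBigO_sub_of_tendsto_norm_slope_atTop
    (h : Tendsto (fun x => ‖slope f t x‖) (𝓝[≠] t) atTop) : (· - t) =O[𝓝 t] (f · - f t) :=
  isBigO_sub_of_eventually_le_norm_slope one_pos (h.eventually_ge_atTop 1)

end Slope

theorem isBigO_sub_of_extendedDeriv_ne_zero {φ : ℝ → ℝ} {t : ℝ}
    (hder : (∃ d : ℝ, HasDerivAt φ d t) ∨
      Tendsto (fun x => (φ x - φ t) / (x - t)) (𝓝[≠] t) atTop ∨
      Tendsto (fun x => (φ x - φ t) / (x - t)) (𝓝[≠] t) atBot)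
    (h0 : ¬HasDerivAt φ 0 t) : (· - t) =O[𝓝 t] (φ · - φ t) := by
  rcases hder with ⟨d, hd⟩ | htop | hbot
  · exact hd.isBigO_sub_rev fun hd0 => h0 (hd0 ▸ hd)
  all_goals
    refine isBigO_sub_of_tendsto_norm_slope_atTop ?_
    simp only [slope_def_field, Real.norm_eq_abs]
  · exact tendsto_abs_atTop_atTop.comp htop
  · exact tendsto_abs_atBot_atTop.comp hbot

section Hausdorff

variable {X Y : Type*} [MetricSpace X] [MeasurableSpace X] [BorelSpace X]
  [MetricSpace Y] [MeasurableSpace Y] [BorelSpace Y] {f : X → Y} {s : Set X} {K : ℝ≥0} {d : ℝ}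

theorem hausdorffMeasure_le_mul_hausdorffMeasure_image
    (h : ∀ x ∈ s, ∀ y ∈ s, dist x y ≤ K * dist (f x) (f y)) (hd : 0 ≤ d) :
    μH[d] s ≤ (K : ℝ≥0∞) ^ d * μH[d] (f '' s) := by
  have hf : AntilipschitzWith K (s.domRestrict f) :=
    AntilipschitzWith.of_le_mul_dist fun x y => h x x.2 y y.2
  have := hf.le_hausdorffMeasure_image hd univ
  rwa [← isometry_subtype_coe.hausdorffMeasure_image (.inl hd), image_univ, Subtype.range_coe,
    image_univ, range_domRestrict] at this

theorem hausdorffMeasure_eq_zero_of_le_mul_dist_of_dist_lt [SecondCountableTopology X] {r : ℝ}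
    (hr : 0 < r) (h : ∀ t ∈ s, ∀ x ∈ s, dist x t < r → dist x t ≤ K * dist (f x) (f t))
    (hd : 0 ≤ d) (himg : μH[d] (f '' s) = 0) : μH[d] s = 0 := by
  refine measure_null_of_locally_null s fun t _ => ⟨s ∩ ball t (r / 2),
    inter_mem_nhdsWithin s (ball_mem_nhds t (half_pos hr)), nonpos_iff_eq_zero.1 ?_⟩
  have hclose : ∀ x ∈ s ∩ ball t (r / 2), ∀ y ∈ s ∩ ball t (r / 2),
      dist x y ≤ K * dist (f x) (f y) := by
    rintro x ⟨hxs, hxt⟩ y ⟨hys, hyt⟩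
    refine h y hys x hxs ?_
    linarith [dist_triangle_right x y t, mem_ball.1 hxt, mem_ball.1 hyt]
  calc μH[d] (s ∩ ball t (r / 2))
      ≤ (K : ℝ≥0∞) ^ d * μH[d] (f '' (s ∩ ball t (r / 2))) :=
        hausdorffMeasure_le_mul_hausdorffMeasure_image hclose hd
    _ = 0 := by rw [measure_mono_null (image_mono inter_subset_left) himg, mul_zero]

end Hausdorff

theorem hausdorffMeasure_eq_zero_of_isBigO_sub {E F : Type*} [NormedAddCommGroup E]
    [MeasurableSpace E] [BorelSpace E] [SecondCountableTopology E] [NormedAddCommGroup F]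
    [MeasurableSpace F] [BorelSpace F] {f : E → F} {s : Set E} {d : ℝ}
    (hs : ∀ t ∈ s, (· - t) =O[𝓝[s] t] (f · - f t)) (hd : 0 ≤ d)
    (himg : μH[d] (f '' s) = 0) : μH[d] s = 0 := by
  set piece : ℕ → ℕ → Set E := fun K m =>
    {t ∈ s | ∀ x ∈ s, dist x t < 1 / (m + 1) → dist x t ≤ K * dist (f x) (f t)}
  have hcover : s ⊆ ⋃ (K : ℕ) (m : ℕ), piece K m := by
    intro t ht
    obtain ⟨c, hc⟩ := (hs t ht).bound
    rw [eventually_nhdsWithin_iff, Metric.eventually_nhds_iff] at hc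
    obtain ⟨ε, hε, hc⟩ := hc
    obtain ⟨m, hm⟩ := exists_nat_one_div_lt hε
    refine mem_iUnion₂.2 ⟨⌈c⌉₊, m, ht, fun x hx hxt => ?_⟩
    calc dist x t ≤ c * ‖f x - f t‖ := by rw [dist_eq_norm]; exact hc (hxt.trans hm) hx
      _ ≤ ⌈c⌉₊ * dist (f x) (f t) := by
        rw [dist_eq_norm]; exact mul_le_mul_of_nonneg_right (Nat.le_ceil c) (norm_nonneg _)
  refine measure_mono_null hcover (measure_iUnion_null fun K => measure_iUnion_null fun m => ?_)
  refine hausdorffMeasure_eq_zero_of_le_mul_dist_of_dist_lt (K := K) (r := 1 / (m + 1))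
    Nat.one_div_pos_of_nat (fun t ht x hx hxt => ?_) hd
    (measure_mono_null (image_mono fun t ht => ht.1) himg)
  exact_mod_cast ht.2 x hx.1 hxt

theorem stmt1 (φ : ℝ → ℝ) (M : Set ℝ)
    (hder : ∀ t ∈ M,
      (∃ d : ℝ, HasDerivAt φ d t) ∨
      Tendsto (fun x => (φ x - φ t) / (x - t)) (𝓝[≠] t) atTop ∨
      Tendsto (fun x => (φ x - φ t) / (x - t)) (𝓝[≠] t) atBot)
    (himg : volume (φ '' M) = 0) :
    ∀ᵐ t, t ∈ M → HasDerivAt φ 0 t := by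
  have hnull : volume {t ∈ M | ¬HasDerivAt φ 0 t} = 0 := by
    rw [← hausdorffMeasure_real] at himg ⊢
    refine hausdorffMeasure_eq_zero_of_isBigO_sub (fun t ht => ?_) zero_le_one
      (measure_mono_null (image_mono fun t ht => ht.1) himg)
    exact (isBigO_sub_of_extendedDeriv_ne_zero (hder t ht.1) ht.2).mono nhdsWithin_le_nhds
  rw [ae_iff]
  simpa only [Classical.not_imp] using hnull
end

section
/- Let f : I → ℝ be Riemann integrable (in particular bounded and almost everywhere continuous) on an interval I, and let φ : [α,β] → I be continuous, differentiable on (α,β), with φ' continuous almost everywhere on (α,β). If the product (f∘φ)·φ' is Riemann integrable on [α,β], then ∫_{φ(α)}^{φ(β)} f(x) dx = ∫_α^β f(φ(t))·φ'(t) dt. -/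
/-!
Let `F` be a primitive of `f` and `H` a primitive of `(f ∘ φ) * φ'`; both are Lipschitz, so
`Ψ = H - F ∘ φ` is continuous with bounded difference quotients at every interior point, and
therefore maps null sets to null sets. Almost everywhere `Ψ' = 0`. Where `φ' = 0` this follows
from the Lipschitz bound on `F`; where `φ'` is continuous and nonzero, `φ` is locally bi-Lipschitz,
hence pulls the null set of discontinuities of `f` back to a null set, and off that set the chain
rule applies. By a Sard-type bound the points with `Ψ' = 0` also have null image, so `Ψ` maps
`[α, β]` onto a null interval and is constant.
-/

open MeasureTheory Set Filter Topology intervalIntegral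

open scoped NNReal ENNReal
open Metric

section HausdorffNull

variable {X Y : Type*} [MetricSpace X] [MeasurableSpace X] [BorelSpace X]
  [MetricSpace Y] [MeasurableSpace Y] [BorelSpace Y] {f : X → Y} {s : Set X} {d : ℝ}

theorem hausdorffMeasure_eq_zero_of_dist_le_mul {K : ℝ≥0} (hd : 0 ≤ d)
    (h : ∀ x ∈ s, ∀ y ∈ s, dist x y ≤ K * dist (f x) (f y)) (h0 : μH[d] (f '' s) = 0) :
    μH[d] s = 0 := by
  have hanti : AntilipschitzWith K (s.domRestrict f) :=
    AntilipschitzWith.of_le_mul_dist fun x y => h x x.2 y y.2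
  have := hanti.le_hausdorffMeasure_image hd univ
  rwa [image_univ, range_domRestrict, h0, mul_zero, nonpos_iff_eq_zero,
    ← isometry_subtype_coe.hausdorffMeasure_image (Or.inl hd), image_univ,
    Subtype.range_coe] at this

theorem hausdorffMeasure_image_eq_zero_of_forall_eventually_dist_le [SecondCountableTopology X]
    (hd : 0 ≤ d) (hs : μH[d] s = 0)
    (h : ∀ x ∈ s, ∃ K : ℝ, ∀ᶠ y in 𝓝[s] x, dist (f y) (f x) ≤ K * dist y x) :
    μH[d] (f '' s) = 0 := by
  let S : ℕ → Set X := fun n =>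
    {x ∈ s | ∀ y ∈ s, dist y x < 1 / (n + 1) → dist (f y) (f x) ≤ n * dist y x}
  have hcover : s ⊆ ⋃ n, S n := by
    intro x hx
    obtain ⟨K, hK⟩ := h x hx
    obtain ⟨δ, hδ, hδK⟩ := Metric.mem_nhdsWithin_iff.1 hK
    obtain ⟨n, hnδ, hnK⟩ : ∃ n : ℕ, 1 / ((n : ℝ) + 1) < δ ∧ K ≤ n :=
      ((tendsto_one_div_add_atTop_nhds_zero_nat.eventually (gt_mem_nhds hδ)).and
        (tendsto_natCast_atTop_atTop.eventually_ge_atTop K)).exists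
    refine mem_iUnion.2 ⟨n, hx, fun y hy hyx => (hδK ⟨hyx.trans hnδ, hy⟩).trans ?_⟩
    gcongr
  have hS : ∀ n, μH[d] (f '' S n) = 0 := fun n => by
    -- `A ↦ μH[d] (f '' A)` is an outer measure, so it suffices to show local nullity.
    refine measure_null_of_locally_null
      (μ := OuterMeasure.comap f (μH[d] : Measure Y).toOuterMeasure) _ fun x hx => ?_
    refine ⟨S n ∩ ball x (1 / (2 * (n + 1))),
      inter_mem_nhdsWithin _ (ball_mem_nhds _ (by positivity)), ?_⟩
    have hlip : LipschitzOnWith n f (S n ∩ ball x (1 / (2 * (n + 1)))) := by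
      refine LipschitzOnWith.of_dist_le_mul fun y hy z hz => ?_
      refine hz.1.2 y hy.1.1 ?_
      calc dist y z ≤ dist y x + dist z x := dist_triangle_right y z x
        _ < 1 / (2 * (n + 1)) + 1 / (2 * (n + 1)) := add_lt_add hy.2 hz.2
        _ = 1 / (n + 1) := by field_simp; norm_num
    refine le_antisymm ?_ bot_le
    rw [OuterMeasure.comap_apply]
    calc _ ≤ _ := hlip.hausdorffMeasure_image_le hd
      _ = 0 := by rw [measure_mono_null (fun y hy => hy.1.1) hs, mul_zero]
  refine measure_mono_null ?_ (measure_iUnion_null hS)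
  rw [← image_iUnion]
  exact image_mono hcover

end HausdorffNull

theorem HasStrictDerivAt.exists_mem_nhds_dist_le_mul {φ : ℝ → ℝ} {d t : ℝ}
    (hφ : HasStrictDerivAt φ d t) (hd : d ≠ 0) :
    ∃ V ∈ 𝓝 t, ∀ x ∈ V, ∀ y ∈ V, dist x y ≤ (2 * ‖d‖₊⁻¹ : ℝ≥0) * dist (φ x) (φ y) := by
  have hsmall := (hasStrictFDerivAt_iff_isLittleO.1 hφ.hasStrictFDerivAt).def
    (half_pos (abs_pos.2 hd))
  rw [nhds_prod_eq] at hsmall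
  obtain ⟨V, hV, hVsmall⟩ := eventually_prod_self_iff'.1 hsmall
  refine ⟨V, hV, fun x hx y hy => ?_⟩
  have hxy := hVsmall x hx y hy
  simp only [ContinuousLinearMap.toSpanSingleton_apply, smul_eq_mul, Real.norm_eq_abs] at hxy
  have : |d| * |x - y| ≤ |φ x - φ y| + |d| / 2 * |x - y| := by
    calc |d| * |x - y| = |(φ x - φ y) - (φ x - φ y - (x - y) * d)| := by rw [← abs_mul]; ring_nf
      _ ≤ _ := (abs_sub _ _).trans (by gcongr)
  push_cast
  rw [Real.dist_eq, Real.dist_eq, Real.norm_eq_abs, mul_comm 2, mul_assoc,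
    le_inv_mul_iff₀ (abs_pos.2 hd)]
  linarith

theorem volume_setOf_hasStrictDerivAt_ne_zero_and_mem_eq_zero {φ φ' : ℝ → ℝ} {D : Set ℝ}
    (hD : volume D = 0) : volume {t | HasStrictDerivAt φ (φ' t) t ∧ φ' t ≠ 0 ∧ φ t ∈ D} = 0 := by
  refine measure_null_of_locally_null _ fun t ht => ?_
  obtain ⟨V, hV, hVexp⟩ := ht.1.exists_mem_nhds_dist_le_mul ht.2.1
  refine ⟨_, inter_mem_nhdsWithin _ hV, ?_⟩
  rw [← hausdorffMeasure_real] at hD ⊢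
  refine hausdorffMeasure_eq_zero_of_dist_le_mul zero_le_one
    (fun x hx y hy => hVexp x hx.2 y hy.2) (measure_mono_null ?_ hD)
  exact image_subset_iff.2 fun x hx => hx.1.2.2

theorem eq_of_isBigO_of_ae_hasDerivAt_zero {g : ℝ → ℝ} {a b : ℝ} (hab : a ≤ b)
    (hg : ContinuousOn g (Icc a b))
    (hO : ∀ t ∈ Ioo a b, (fun u => g u - g t) =O[𝓝 t] fun u => u - t)
    (hd : ∀ᵐ t, t ∈ Ioo a b → HasDerivAt g 0 t) : g a = g b := by
  have hgood : volume (g '' {t ∈ Ioo a b | HasDerivAt g 0 t}) = 0 :=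
    addHaar_image_eq_zero_of_det_fderivWithin_eq_zero volume
      (fun t ht => ht.2.hasFDerivAt.hasFDerivWithinAt) (fun _ _ => by simp)
  have hbad : volume (g '' {t ∈ Ioo a b | ¬ HasDerivAt g 0 t}) = 0 := by
    rw [← hausdorffMeasure_real]
    refine hausdorffMeasure_image_eq_zero_of_forall_eventually_dist_le zero_le_one ?_
      fun t ht => ?_
    · rw [hausdorffMeasure_real]
      exact measure_eq_zero_iff_ae_notMem.2 (hd.mono fun t ht h => h.2 (ht h.1))
    · obtain ⟨K, hK⟩ := (hO t ht.1).bound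
      exact ⟨K, nhdsWithin_le_nhds (hK.mono fun u hu => by simpa [Real.dist_eq] using hu)⟩
  have himage : volume (g '' Icc a b) = 0 := by
    refine measure_mono_null ?_ (measure_union_null (measure_union_null hgood hbad)
      ((toFinite {g a, g b}).measure_zero _))
    rintro _ ⟨t, ⟨hat, htb⟩, rfl⟩
    rcases hat.eq_or_lt with rfl | hat
    · simp
    rcases htb.eq_or_lt with rfl | htb
    · simp
    by_cases h : HasDerivAt g 0 t
    · exact Or.inl (Or.inl ⟨t, ⟨⟨hat, htb⟩, h⟩, rfl⟩)
    · exact Or.inl (Or.inr ⟨t, ⟨⟨hat, htb⟩, h⟩, rfl⟩)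
  have hinterval := measure_mono_null
    (uIcc_of_le hab ▸ intermediate_value_uIcc (uIcc_of_le hab ▸ hg)) himage
  rwa [Real.volume_interval, ENNReal.ofReal_eq_zero, abs_nonpos_iff, sub_eq_zero, eq_comm]
    at hinterval

theorem LipschitzOnWith.isBigO_comp_sub {α E F : Type*} [SeminormedAddCommGroup E]
    [SeminormedAddCommGroup F] {f : E → F} {g : α → E} {K : ℝ≥0} {s : Set E} {l : Filter α}
    {t : α} (hf : LipschitzOnWith K f s) (hg : ∀ᶠ u in l, g u ∈ s) (ht : g t ∈ s) :
    (fun u => f (g u) - f (g t)) =O[l] fun u => g u - g t :=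
  .of_bound K (hg.mono fun u hu => by simpa only [dist_eq_norm] using hf.dist_le_mul _ hu _ ht)

theorem LipschitzOnWith.hasDerivAt_comp_of_hasDerivAt_zero {f g : ℝ → ℝ} {K : ℝ≥0}
    {s : Set ℝ} {t : ℝ} (hf : LipschitzOnWith K f s) (hg : HasDerivAt g 0 t)
    (hgs : ∀ᶠ u in 𝓝 t, g u ∈ s) : HasDerivAt (f ∘ g) 0 t := by
  rw [hasDerivAt_iff_isLittleO] at hg ⊢
  simp only [smul_zero, sub_zero] at hg ⊢
  exact (hf.isBigO_comp_sub hgs hgs.self_of_nhds).trans_isLittleO hg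

theorem lipschitzOnWith_primitive {E : Type*} [NormedAddCommGroup E] [NormedSpace ℝ E]
    {f : ℝ → E} {s : Set ℝ} {c : ℝ} {M : ℝ≥0} (hs : s.OrdConnected) (hc : c ∈ s)
    (hf : IntegrableOn f s) (hM : ∀ x ∈ s, ‖f x‖ ≤ M) :
    LipschitzOnWith M (fun u => ∫ x in c..u, f x) s := by
  refine LipschitzOnWith.of_dist_le_mul fun u hu v hv => ?_
  have hint : ∀ w ∈ s, IntervalIntegrable f volume c w := fun w hw =>
    (hf.mono_set (hs.uIcc_subset hc hw)).intervalIntegrable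
  rw [dist_eq_norm, integral_interval_sub_left (hint u hu) (hint v hv), Real.dist_eq]
  exact norm_integral_le_of_norm_le_const fun x hx =>
    hM x (hs.uIcc_subset hv hu (uIoc_subset_uIcc hx))

theorem hasDerivWithinAt_primitive_Icc {E : Type*} [NormedAddCommGroup E] [NormedSpace ℝ E]
    [CompleteSpace E] {f : ℝ → E} {a b c y : ℝ} (hf : IntegrableOn f (Icc a b))
    (hc : c ∈ Icc a b) (hy : y ∈ Icc a b) (hcont : ContinuousWithinAt f (Icc a b) y) :
    HasDerivWithinAt (fun u => ∫ x in c..u, f x) (f y) (Icc a b) y := by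
  have : Fact (y ∈ Icc a b) := ⟨hy⟩
  exact integral_hasDerivWithinAt_right
    (hf.mono_set (ordConnected_Icc.uIcc_subset hc hy)).intervalIntegrable
    ⟨Icc a b, self_mem_nhdsWithin, hf.aestronglyMeasurable⟩ hcont

namespace RiemannIntegrableOn

variable {f : ℝ → ℝ} {s : Set ℝ}

theorem mono {t : Set ℝ} (hf : RiemannIntegrableOn f s) (hts : t ⊆ s) :
    RiemannIntegrableOn f t :=
  ⟨hf.1.imp fun _ hM x hx => hM x (hts hx),
    (ae_restrict_of_ae_restrict_of_subset hts hf.2).mono fun _ hx => hx.mono hts⟩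

theorem ae_continuousWithinAt (hf : RiemannIntegrableOn f s) (hs : MeasurableSet s) :
    ∀ᵐ x, x ∈ s → ContinuousWithinAt f s x :=
  (ae_restrict_iff' hs).1 hf.2

theorem integrableOn_s5 (hf : RiemannIntegrableOn f s) (hs : MeasurableSet s)
    (hs' : volume s ≠ ∞) : IntegrableOn f s := by
  obtain ⟨M, hM⟩ := hf.1
  have hgood : {x ∈ s | ContinuousWithinAt f s x} =ᵐ[volume] s :=
    eventuallyEq_set.2 ((hf.ae_continuousWithinAt hs).mono fun x hx =>
      ⟨fun h => h.1, fun h => ⟨h, hx h⟩⟩)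
  have hmeas : AEStronglyMeasurable f (volume.restrict s) := by
    rw [← Measure.restrict_congr_set hgood]
    exact (ContinuousOn.aemeasurable₀ (fun x hx => hx.2.mono (sep_subset _ _))
      (hs.nullMeasurableSet.congr hgood.symm)).aestronglyMeasurable
  exact ⟨hmeas, .restrict_of_bounded (C := M) hs'.lt_top
    ((ae_restrict_iff' hs).2 (ae_of_all _ fun x hx => (Real.norm_eq_abs _).trans_le (hM x hx)))⟩

variable {a b c : ℝ}

theorem exists_lipschitzOnWith_primitive (hf : RiemannIntegrableOn f (Icc a b))
    (hc : c ∈ Icc a b) : ∃ K, LipschitzOnWith K (fun u => ∫ x in c..u, f x) (Icc a b) := by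
  obtain ⟨M, hM⟩ := hf.1
  exact ⟨M.toNNReal, lipschitzOnWith_primitive ordConnected_Icc hc
    (hf.integrableOn_s5 measurableSet_Icc (by simp))
    fun x hx => (hM x hx).trans (Real.le_coe_toNNReal M)⟩

theorem ae_hasDerivAt_primitive (hf : RiemannIntegrableOn f (Icc a b)) (hc : c ∈ Icc a b) :
    ∀ᵐ t, t ∈ Ioo a b → HasDerivAt (fun u => ∫ x in c..u, f x) (f t) t := by
  filter_upwards [hf.ae_continuousWithinAt measurableSet_Icc] with t hcont ht
  exact (hasDerivWithinAt_primitive_Icc (hf.integrableOn_s5 measurableSet_Icc (by simp)) hc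
    (Ioo_subset_Icc_self ht) (hcont (Ioo_subset_Icc_self ht))).hasDerivAt (Icc_mem_nhds ht.1 ht.2)

theorem ae_hasDerivAt_primitive_comp {φ φ' : ℝ → ℝ} {U : Set ℝ}
    (hf : RiemannIntegrableOn f (Icc a b)) (hc : c ∈ Icc a b) (hU : IsOpen U)
    (hmap : MapsTo φ U (Icc a b)) (hφ : ∀ t ∈ U, HasDerivAt φ (φ' t) t)
    (hφ' : ∀ᵐ t, t ∈ U → ContinuousAt φ' t) :
    ∀ᵐ t, t ∈ U → HasDerivAt (fun t => ∫ x in c..φ t, f x) (f (φ t) * φ' t) t := by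
  obtain ⟨K, hK⟩ := hf.exists_lipschitzOnWith_primitive hc
  have hdisc : volume {x | x ∈ Icc a b ∧ ¬ ContinuousWithinAt f (Icc a b) x} = 0 :=
    measure_eq_zero_iff_ae_notMem.2 ((hf.ae_continuousWithinAt measurableSet_Icc).mono
      fun x hx h => h.2 (hx h.1))
  filter_upwards [hφ', measure_eq_zero_iff_ae_notMem.1
      (volume_setOf_hasStrictDerivAt_ne_zero_and_mem_eq_zero (φ := φ) (φ' := φ') hdisc)]
    with t hφ't hgood ht
  have hnhds : ∀ᶠ u in 𝓝 t, φ u ∈ Icc a b :=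
    eventually_of_mem (hU.mem_nhds ht) fun u hu => hmap hu
  by_cases h0 : φ' t = 0
  · rw [h0, mul_zero]
    exact hK.hasDerivAt_comp_of_hasDerivAt_zero (h0 ▸ hφ t ht) hnhds
  · have hstrict : HasStrictDerivAt φ (φ' t) t :=
      hasStrictDerivAt_of_hasDerivAt_of_continuousAt
        (eventually_of_mem (hU.mem_nhds ht) hφ) (hφ't ht)
    have hcont : ContinuousWithinAt f (Icc a b) (φ t) := by
      by_contra h
      exact hgood ⟨hstrict, h0, hmap ht, h⟩
    exact (hasDerivWithinAt_primitive_Icc (hf.integrableOn_s5 measurableSet_Icc (by simp)) hc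
      (hmap ht) hcont).comp_hasDerivAt t (hφ t ht) hnhds

end RiemannIntegrableOn

theorem stmt5_general (I : Set ℝ) (f : ℝ → ℝ)
    (α β : ℝ) (hαβ : α ≤ β) (φ φ' : ℝ → ℝ)
    (hmap : ∀ t ∈ Set.Icc α β, φ t ∈ I)
    (hφc : ContinuousOn φ (Set.Icc α β))
    (hφd : ∀ t ∈ Set.Ioo α β, HasDerivAt φ (φ' t) t)
    (hφ'c : ∀ᵐ t, t ∈ Set.Ioo α β → ContinuousWithinAt φ' (Set.Ioo α β) t)
    (hf : RiemannIntegrableOn f I)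
    (hprod : RiemannIntegrableOn (fun t => f (φ t) * φ' t) (Set.Icc α β)) :
    ∫ x in (φ α)..(φ β), f x = ∫ t in α..β, f (φ t) * φ' t := by
  obtain ⟨m, M, himage⟩ : ∃ m M, φ '' Icc α β = Icc m M := ⟨_, _, hφc.image_Icc hαβ⟩
  have hmapsTo : MapsTo φ (Icc α β) (Icc m M) := himage ▸ mapsTo_image φ _
  have hfJ : RiemannIntegrableOn f (Icc m M) := hf.mono (himage ▸ image_subset_iff.2 hmap)
  have hα : α ∈ Icc α β := left_mem_Icc.2 hαβ
  set F := fun u => ∫ x in φ α..u, f x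
  set H := fun t => ∫ s in α..t, f (φ s) * φ' s
  obtain ⟨KF, hF⟩ := hfJ.exists_lipschitzOnWith_primitive (hmapsTo hα)
  obtain ⟨KH, hH⟩ := hprod.exists_lipschitzOnWith_primitive hα
  have hO : ∀ t ∈ Ioo α β,
      (fun u => (H u - F (φ u)) - (H t - F (φ t))) =O[𝓝 t] fun u => u - t := by
    intro t ht
    have hIcc : ∀ᶠ u in 𝓝 t, u ∈ Icc α β := Icc_mem_nhds ht.1 ht.2
    have hHO := hH.isBigO_comp_sub (g := id) hIcc hIcc.self_of_nhds
    have hFO := (hF.isBigO_comp_sub (hIcc.mono hmapsTo) (hmapsTo hIcc.self_of_nhds)).trans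
      (hφd t ht).hasFDerivAt.isBigO_sub
    exact (hHO.sub hFO).congr_left fun u => by simp only [id]; ring
  have hd : ∀ᵐ t, t ∈ Ioo α β → HasDerivAt (fun t => H t - F (φ t)) 0 t := by
    have hφ'c' : ∀ᵐ t, t ∈ Ioo α β → ContinuousAt φ' t :=
      hφ'c.mono fun t h ht => (h ht).continuousAt (Ioo_mem_nhds ht.1 ht.2)
    filter_upwards [hprod.ae_hasDerivAt_primitive hα,
      hfJ.ae_hasDerivAt_primitive_comp (hmapsTo hα) isOpen_Ioo
        (hmapsTo.mono_left Ioo_subset_Icc_self) hφd hφ'c'] with t hHt hFt ht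
    exact sub_self (f (φ t) * φ' t) ▸ (hHt ht).sub (hFt ht)
  have := eq_of_isBigO_of_ae_hasDerivAt_zero hαβ
    (hH.continuousOn.sub (hF.continuousOn.comp hφc hmapsTo)) hO hd
  simp only [Pi.sub_apply, Function.comp_apply, integral_same, sub_self] at this
  linarith

theorem stmt5 (I : Set ℝ) (hI : I.OrdConnected) (f : ℝ → ℝ)
    (α β : ℝ) (hαβ : α ≤ β) (φ φ' : ℝ → ℝ)
    (hmap : ∀ t ∈ Set.Icc α β, φ t ∈ I)
    (hφc : ContinuousOn φ (Set.Icc α β))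
    (hφd : ∀ t ∈ Set.Ioo α β, HasDerivAt φ (φ' t) t)
    (hφ'c : ∀ᵐ t, t ∈ Set.Ioo α β → ContinuousWithinAt φ' (Set.Ioo α β) t)
    (hf : RiemannIntegrableOn f I)
    (hprod : RiemannIntegrableOn (fun t => f (φ t) * φ' t) (Set.Icc α β)) :
    ∫ x in (φ α)..(φ β), f x = ∫ t in α..β, f (φ t) * φ' t :=
  stmt5_general I f α β hαβ φ φ' hmap hφc hφd hφ'c hf hprod
end

section
/- Let f : I → ℝ and φ : [α,β] → I be continuous, differentiable on (α,β), with φ' Riemann integrable on every compact subinterval [c,d] ⊂ (α,β). Let J be the closed interval with endpoints φ(α), φ(β). If (f∘φ)·φ' is Riemann integrable on [α,β] and the restriction of f to J is bounded, then f is Riemann integrable on J and ∫_{φ(α)}^{φ(β)} f(x) dx = ∫_α^β f(φ(t))·φ'(t) dt. -/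
open MeasureTheory Set Filter Topology intervalIntegral

theorem RiemannIntegrableOn.ae_continuousAt {f : ℝ → ℝ} {a b : ℝ}
    (hf : RiemannIntegrableOn f (Icc a b)) : ∀ᵐ t, t ∈ Ioo a b → ContinuousAt f t := by
  filter_upwards [(ae_restrict_iff' measurableSet_Icc).1 hf.2] with t ht ht'
  exact (ht (Ioo_subset_Icc_self ht')).continuousAt (Icc_mem_nhds ht'.1 ht'.2)

theorem ae_imp_of_forall_Ioo_subset {P : ℝ → Prop} {a b : ℝ}
    (h : ∀ c d, a < c → c ≤ d → d < b → ∀ᵐ t, t ∈ Ioo c d → P t) :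
    ∀ᵐ t, t ∈ Ioo a b → P t := by
  rw [ae_iff]
  refine measure_null_of_locally_null _ fun x hx => ?_
  obtain ⟨hx, -⟩ := Classical.not_imp.1 hx
  obtain ⟨c, hac, hcx⟩ := exists_between hx.1
  obtain ⟨d, hxd, hdb⟩ := exists_between hx.2
  refine ⟨_, inter_mem_nhdsWithin _ (Ioo_mem_nhds hcx hxd),
    measure_mono_null (fun t ⟨ht, htcd⟩ => ?_) (ae_iff.1 (h c d hac (hcx.trans hxd).le hdb))⟩
  exact fun hP => (Classical.not_imp.1 ht).2 (hP htcd)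

theorem locallyIntegrableOn_Ioo_of_hasDerivAt {φ φ' : ℝ → ℝ} {a b : ℝ}
    (hderiv : ∀ t ∈ Ioo a b, HasDerivAt φ (φ' t) t)
    (hbdd : ∀ c d, a < c → c ≤ d → d < b → ∃ M, ∀ t ∈ Icc c d, |φ' t| ≤ M) :
    LocallyIntegrableOn φ' (Ioo a b) := by
  intro x hx
  obtain ⟨c, hac, hcx⟩ := exists_between hx.1
  obtain ⟨d, hxd, hdb⟩ := exists_between hx.2
  obtain ⟨M, hM⟩ := hbdd c d hac (hcx.trans hxd).le hdb
  have hmeas : AEStronglyMeasurable φ' (volume.restrict (Icc c d)) :=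
    (measurable_deriv φ).aestronglyMeasurable.congr <| ae_restrict_of_forall_mem measurableSet_Icc
      fun t ht => (hderiv t (Icc_subset_Ioo hac hdb ht)).deriv
  exact ⟨Icc c d, mem_nhdsWithin_of_mem_nhds (Icc_mem_nhds hcx hxd),
    Integrable.of_bound hmeas M (ae_restrict_of_forall_mem measurableSet_Icc hM)⟩

theorem measurable_indicator_setOf_continuousAt {α γ : Type*} [TopologicalSpace α]
    [MeasurableSpace α] [OpensMeasurableSpace α] [TopologicalSpace γ]
    [TopologicalSpace.PseudoMetrizableSpace γ] [MeasurableSpace γ] [BorelSpace γ] [Zero γ]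
    (f : α → γ) : Measurable ({x | ContinuousAt f x}.indicator f) := by
  classical
  rw [← piecewise_eq_indicator]
  exact ContinuousOn.measurable_piecewise (fun x hx => (hx : ContinuousAt f x).continuousWithinAt)
    continuousOn_const (IsGδ.setOfPred_continuousAt f).measurableSet

theorem continuousAt_of_continuousAt_comp_mul_deriv {f φ φ' : ℝ → ℝ} {t : ℝ}
    (hderiv : ∀ᶠ s in 𝓝 t, HasDerivAt φ (φ' s) s) (hφ' : ContinuousAt φ' t) (ht : φ' t ≠ 0)
    (hg : ContinuousAt (fun s => f (φ s) * φ' s) t) : ContinuousAt f (φ t) := by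
  have hs := hasStrictDerivAt_of_hasDerivAt_of_continuousAt hderiv hφ'
  set L := hs.localInverse φ (φ' t) t ht
  have hL : ContinuousAt L (φ t) := (hs.to_localInverse ht).hasDerivAt.continuousAt
  have hLφ : L (φ t) = t := (hs.eventually_left_inverse ht).self_of_nhds
  have hq : ContinuousAt (fun s => f (φ s) * φ' s / φ' s) t := hg.div hφ' ht
  have hne : ∀ᶠ y in 𝓝 (φ t), φ' (L y) ≠ 0 :=
    (by simpa only [hLφ] using hL.tendsto : Tendsto L (𝓝 (φ t)) (𝓝 t)).eventually
      (hφ'.eventually_ne ht)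
  refine (hq.comp_of_eq hL hLφ).congr ?_
  filter_upwards [hs.eventually_right_inverse ht, hne] with y hy hy'
  simp only [Function.comp_apply, mul_div_cancel_right₀ _ hy']
  exact congrArg f hy

theorem volume_image_eq_zero_of_hasDerivWithinAt_zero {f : ℝ → ℝ} {s : Set ℝ}
    (hf : ∀ x ∈ s, HasDerivWithinAt f 0 s x) : volume (f '' s) = 0 := by
  refine addHaar_image_eq_zero_of_det_fderivWithin_eq_zero volume (f' := fun _ => 0)
    (fun x hx => by simpa using (hf x hx).hasFDerivWithinAt) (fun _ _ => ?_)
  simp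

theorem ae_continuousAt_of_ae_continuousAt_comp {f φ φ' : ℝ → ℝ} {a b : ℝ}
    (hderiv : ∀ t ∈ Ioo a b, HasDerivAt φ (φ' t) t)
    (hf : ∀ᵐ t, t ∈ Ioo a b → φ' t ≠ 0 → ContinuousAt f (φ t)) :
    ∀ᵐ x, x ∈ φ '' Icc a b → ContinuousAt f x := by
  set B := {t | t ∈ Ioo a b ∧ φ' t ≠ 0 ∧ ¬ContinuousAt f (φ t)}
  set Z := {t | t ∈ Ioo a b ∧ φ' t = 0}
  have hB : volume (φ '' B) = 0 := by
    refine addHaar_image_eq_zero_of_differentiableOn_of_addHaar_eq_zero volume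
      (fun t ht => (hderiv t ht.1).differentiableAt.differentiableWithinAt) ?_
    refine measure_mono_null (fun t ⟨ht, hne, hc⟩ => ?_) (ae_iff.1 hf)
    exact fun h => hc (h ht hne)
  have hZ : volume (φ '' Z) = 0 :=
    volume_image_eq_zero_of_hasDerivWithinAt_zero fun t ht =>
      ht.2 ▸ (hderiv t ht.1).hasDerivWithinAt
  have hN : volume (φ '' B ∪ φ '' Z ∪ {φ a, φ b}) = 0 :=
    measure_union_null (measure_union_null hB hZ) ((Set.toFinite _).measure_zero _)
  filter_upwards [measure_eq_zero_iff_ae_notMem.1 hN] with x hx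
  rintro ⟨t, ht, rfl⟩
  simp only [mem_union, mem_insert_iff, mem_singleton_iff, not_or] at hx
  obtain ⟨⟨hxB, hxZ⟩, hxa, hxb⟩ := hx
  have ht' : t ∈ Ioo a b :=
    ⟨ht.1.lt_of_ne (by rintro rfl; exact hxa rfl), ht.2.lt_of_ne (by rintro rfl; exact hxb rfl)⟩
  have hne : φ' t ≠ 0 := fun h0 => hxZ ⟨t, ⟨ht', h0⟩, rfl⟩
  by_contra hc
  exact hxB ⟨t, ⟨ht', hne, hc⟩, rfl⟩

section Substitution

variable {φ φ' k : ℝ → ℝ} {a b : ℝ}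

/-- Both sides of the substitution formula `∫ t in a..b, k (φ t) * φ' t = ∫ y in φ a..φ b, k y`
are dominated by the `L¹` norm of `k` for this measure. -/
noncomputable def substitutionMeasure (φ φ' : ℝ → ℝ) (a b : ℝ) : Measure ℝ :=
  ((volume.restrict (Icc a b)).withDensity fun t => ‖φ' t‖ₑ).map φ +
    volume.restrict (uIoc (φ a) (φ b))

theorem lintegral_enorm_substitutionMeasure (hφ : AEMeasurable φ (volume.restrict (Icc a b)))
    (hφ' : AEMeasurable φ' (volume.restrict (Icc a b))) (hk : Measurable k) :
    ∫⁻ y, ‖k y‖ₑ ∂substitutionMeasure φ φ' a b =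
      (∫⁻ t in Icc a b, ‖k (φ t) * φ' t‖ₑ) + ∫⁻ y in uIoc (φ a) (φ b), ‖k y‖ₑ := by
  rw [substitutionMeasure, lintegral_add_measure, lintegral_map' hk.enorm.aemeasurable
    (hφ.mono_ac (withDensity_absolutelyContinuous _ _)),
    lintegral_withDensity_eq_lintegral_mul₀ hφ'.enorm (g := fun t => ‖k (φ t)‖ₑ)
      (hk.enorm.comp_aemeasurable hφ)]
  simp only [Pi.mul_apply, enorm_mul, mul_comm]

theorem isFiniteMeasure_substitutionMeasure (hφ' : IntegrableOn φ' (Icc a b)) :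
    IsFiniteMeasure (substitutionMeasure φ φ' a b) := by
  have := isFiniteMeasure_withDensity hφ'.2.ne
  have : IsFiniteMeasure (volume.restrict (uIoc (φ a) (φ b))) :=
    isFiniteMeasure_restrict.2 measure_Ioc_lt_top.ne
  rw [substitutionMeasure]
  infer_instance

theorem enorm_integral_comp_mul_sub_integral_le (hab : a ≤ b)
    (hφ : AEMeasurable φ (volume.restrict (Icc a b)))
    (hφ' : AEMeasurable φ' (volume.restrict (Icc a b))) (hk : Measurable k) :
    ‖(∫ t in a..b, k (φ t) * φ' t) - ∫ y in φ a..φ b, k y‖ₑ ≤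
      ∫⁻ y, ‖k y‖ₑ ∂substitutionMeasure φ φ' a b := by
  rw [lintegral_enorm_substitutionMeasure hφ hφ' hk]
  refine enorm_sub_le.trans (add_le_add ?_ ?_)
  · rw [integral_of_le hab]
    exact (enorm_integral_le_lintegral_enorm _).trans (lintegral_mono_set Ioc_subset_Icc_self)
  · rw [← ofReal_norm, norm_integral_eq_norm_integral_uIoc, ofReal_norm]
    exact enorm_integral_le_lintegral_enorm _

theorem integral_comp_mul_deriv_of_integrableOn_deriv (hab : a ≤ b)
    (hφ : ContinuousOn φ (Icc a b)) (hderiv : ∀ t ∈ Ioo a b, HasDerivAt φ (φ' t) t)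
    (hφ' : IntegrableOn φ' (Icc a b)) (hk : Measurable k)
    (hkφ : IntegrableOn (fun t => k (φ t) * φ' t) (Icc a b))
    (hk_int : IntervalIntegrable k volume (φ a) (φ b)) :
    ∫ t in a..b, k (φ t) * φ' t = ∫ u in φ a..φ b, k u := by
  have hφm : AEMeasurable φ (volume.restrict (Icc a b)) := hφ.aemeasurable measurableSet_Icc
  have := isFiniteMeasure_substitutionMeasure (φ := φ) hφ'
  have hkν : Integrable k (substitutionMeasure φ φ' a b) := by
    refine ⟨hk.aestronglyMeasurable, ?_⟩
    rw [hasFiniteIntegral_iff_enorm, lintegral_enorm_substitutionMeasure hφm hφ'.aemeasurable hk]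
    exact ENNReal.add_lt_top.2 ⟨hkφ.2, (intervalIntegrable_iff.1 hk_int).2⟩
  rw [← sub_eq_zero, ← enorm_eq_zero]
  refine le_antisymm (ENNReal.le_of_forall_pos_le_add fun ε hε _ => ?_) zero_le
  obtain ⟨g, hg, -⟩ := hkν.exists_boundedContinuous_lintegral_sub_le (ENNReal.coe_ne_zero.2 hε.ne')
  have hgφ : IntegrableOn (fun t => g (φ t) * φ' t) (Icc a b) :=
    hφ'.bdd_mul ((g.continuous.measurable.comp_aemeasurable hφm).aestronglyMeasurable)
      (Eventually.of_forall fun t => g.norm_coe_le_norm _)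
  have hg_subst : ∫ t in a..b, g (φ t) * φ' t = ∫ y in φ a..φ b, g y := by
    rw [← uIcc_of_le hab] at hφ hgφ
    refine integral_comp_mul_deriv''' hφ (fun t ht => ?_) g.continuous.continuousOn
      (g.continuous.continuousOn.integrableOn_compact (isCompact_uIcc.image_of_continuousOn hφ))
      hgφ
    rw [min_eq_left hab, max_eq_right hab] at ht
    exact (hderiv t ht).hasDerivWithinAt
  have hkφ_int {u : ℝ → ℝ} (hu : IntegrableOn (fun t => u (φ t) * φ' t) (Icc a b)) :
      IntervalIntegrable (fun t => u (φ t) * φ' t) volume a b :=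
    (intervalIntegrable_iff_integrableOn_Icc_of_le hab).2 hu
  calc ‖(∫ t in a..b, k (φ t) * φ' t) - ∫ y in φ a..φ b, k y‖ₑ
      = ‖(∫ t in a..b, (k - g) (φ t) * φ' t) - ∫ y in φ a..φ b, (k - g) y‖ₑ := by
        simp only [Pi.sub_apply, sub_mul]
        rw [integral_sub (hkφ_int hkφ) (hkφ_int hgφ),
          integral_sub hk_int (g.continuous.intervalIntegrable _ _), hg_subst,
          sub_sub_sub_cancel_right]
    _ ≤ ∫⁻ y, ‖(k - g) y‖ₑ ∂substitutionMeasure φ φ' a b :=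
        enorm_integral_comp_mul_sub_integral_le hab hφm hφ'.aemeasurable
          (hk.sub g.continuous.measurable)
    _ ≤ 0 + ε := by simpa using hg

theorem aestronglyMeasurable_comp_mul_deriv (hφ : ContinuousOn φ (Icc a b))
    (hφ' : LocallyIntegrableOn φ' (Ioo a b)) (hk : Measurable k) :
    AEStronglyMeasurable (fun t => k (φ t) * φ' t) (volume.restrict (Icc a b)) := by
  refine (hk.comp_aemeasurable (hφ.aemeasurable measurableSet_Icc)).aestronglyMeasurable.mul ?_
  rw [← Measure.restrict_congr_set Ioo_ae_eq_Icc]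
  exact hφ'.aestronglyMeasurable

theorem integral_comp_mul_deriv_of_locallyIntegrable (hab : a ≤ b)
    (hφ : ContinuousOn φ (Icc a b)) (hderiv : ∀ t ∈ Ioo a b, HasDerivAt φ (φ' t) t)
    (hφ' : LocallyIntegrableOn φ' (Ioo a b)) (hk : Measurable k) (hk_loc : LocallyIntegrable k)
    (hkφ : IntegrableOn (fun t => k (φ t) * φ' t) (Icc a b)) :
    ∫ t in a..b, k (φ t) * φ' t = ∫ u in φ a..φ b, k u := by
  rcases hab.eq_or_lt with rfl | hlt
  · simp
  have hk_int (p q : ℝ) : IntervalIntegrable k volume p q :=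
    (hk_loc.integrableOn_isCompact isCompact_uIcc).intervalIntegrable
  have hkφ_int {c d : ℝ} (hc : a ≤ c) (hcd : c ≤ d) (hd : d ≤ b) :
      IntervalIntegrable (fun t => k (φ t) * φ' t) volume c d :=
    (intervalIntegrable_iff_integrableOn_Icc_of_le hcd).2 (hkφ.mono_set (Icc_subset_Icc hc hd))
  set H : ℝ → ℝ := fun x => (∫ t in a..x, k (φ t) * φ' t) - ∫ u in φ a..φ x, k u
  have hH : ContinuousOn H (Icc a b) := by
    refine ContinuousOn.sub ?_ ((continuous_primitive hk_int (φ a)).comp_continuousOn hφ)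
    rw [← uIcc_of_le hab] at hkφ ⊢
    exact continuousOn_primitive_interval hkφ
  have hH_eq {c x : ℝ} (hc : c ∈ Ioo a b) (hx : x ∈ Ioo a b) (hcx : c ≤ x) : H x = H c := by
    have hsub : Icc c x ⊆ Ioo a b := Icc_subset_Ioo hc.1 hx.2
    have := integral_comp_mul_deriv_of_integrableOn_deriv hcx
      (hφ.mono (hsub.trans Ioo_subset_Icc_self))
      (fun t ht => hderiv t (hsub (Ioo_subset_Icc_self ht)))
      (hφ'.integrableOn_compact_subset hsub isCompact_Icc) hk
      (hkφ.mono_set (hsub.trans Ioo_subset_Icc_self)) (hk_int _ _)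
    simp only [H]
    rw [← integral_add_adjacent_intervals (hkφ_int le_rfl hc.1.le hc.2.le)
        (hkφ_int hc.1.le hcx hx.2.le),
      ← integral_add_adjacent_intervals (hk_int (φ a) (φ c)) (hk_int (φ c) (φ x)), this]
    ring
  obtain ⟨m, hm⟩ := nonempty_Ioo.2 hlt
  have hH_const : EqOn H (fun _ => H m) (Icc a b) := by
    refine EqOn.of_subset_closure (fun x hx => ?_) hH continuousOn_const Ioo_subset_Icc_self
      (closure_Ioo hlt.ne).ge
    rcases le_total m x with hmx | hxm
    · exact hH_eq hm hx hmx
    · exact (hH_eq hx hm hxm).symm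
  have : H b = H a := (hH_const ⟨hlt.le, le_rfl⟩).trans (hH_const ⟨le_rfl, hlt.le⟩).symm
  simpa [H, sub_eq_zero] using this

theorem integral_comp_mul_deriv_of_intervalIntegrable (hab : a ≤ b)
    (hφ : ContinuousOn φ (Icc a b)) (hderiv : ∀ t ∈ Ioo a b, HasDerivAt φ (φ' t) t)
    (hφ' : LocallyIntegrableOn φ' (Ioo a b)) (hk : Measurable k)
    (hkφ : IntegrableOn (fun t => k (φ t) * φ' t) (Icc a b))
    (hk_int : IntervalIntegrable k volume (φ a) (φ b)) :
    ∫ t in a..b, k (φ t) * φ' t = ∫ u in φ a..φ b, k u := by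
  set K : ℕ → ℝ → ℝ := fun n => {y | |k y| ≤ n}.indicator k
  have hK_meas (n : ℕ) : Measurable (K n) :=
    hk.indicator (measurableSet_le hk.abs measurable_const)
  have hK_le (n : ℕ) (y : ℝ) : ‖K n y‖ ≤ ‖k y‖ := norm_indicator_le_norm_self _ _
  have hKφ_le (n : ℕ) (t : ℝ) : ‖K n (φ t) * φ' t‖ ≤ ‖k (φ t) * φ' t‖ := by
    simpa only [norm_mul] using mul_le_mul_of_nonneg_right (hK_le n (φ t)) (norm_nonneg (φ' t))
  have hK_lim (y : ℝ) : Tendsto (fun n => K n y) atTop (𝓝 (k y)) :=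
    tendsto_const_nhds.congr' <| eventually_atTop.2
      ⟨⌈|k y|⌉₊, fun n hn =>
        (indicator_of_mem (show y ∈ {y | |k y| ≤ n} from Nat.ceil_le.1 hn) k).symm⟩
  have hK_subst (n : ℕ) : ∫ t in a..b, K n (φ t) * φ' t = ∫ u in φ a..φ b, K n u := by
    refine integral_comp_mul_deriv_of_locallyIntegrable hab hφ hderiv hφ' (hK_meas n) ?_
      (Integrable.mono hkφ (aestronglyMeasurable_comp_mul_deriv hφ hφ' (hK_meas n))
        (Eventually.of_forall (hKφ_le n)))
    refine (locallyIntegrable_const (n : ℝ)).mono (hK_meas n).aestronglyMeasurable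
      (Eventually.of_forall fun y => ?_)
    by_cases hy : |k y| ≤ n <;> simp [K, hy]
  have h_left : Tendsto (fun n => ∫ t in a..b, K n (φ t) * φ' t) atTop
      (𝓝 (∫ t in a..b, k (φ t) * φ' t)) := by
    refine tendsto_integral_filter_of_dominated_convergence _ (Eventually.of_forall fun n => ?_)
      (Eventually.of_forall fun n => Eventually.of_forall fun t _ => hKφ_le n t)
      ((intervalIntegrable_iff_integrableOn_Icc_of_le hab).2 hkφ).norm
      (Eventually.of_forall fun t _ => (hK_lim (φ t)).mul_const _)
    rw [uIoc_of_le hab]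
    exact (aestronglyMeasurable_comp_mul_deriv hφ hφ' (hK_meas n)).mono_set Ioc_subset_Icc_self
  have h_right : Tendsto (fun n => ∫ u in φ a..φ b, K n u) atTop (𝓝 (∫ u in φ a..φ b, k u)) :=
    tendsto_integral_filter_of_dominated_convergence _
      (Eventually.of_forall fun n => (hK_meas n).aestronglyMeasurable)
      (Eventually.of_forall fun n => Eventually.of_forall fun y _ => hK_le n y) hk_int.norm
      (Eventually.of_forall fun y _ => hK_lim y)
  exact tendsto_nhds_unique h_left (h_right.congr fun n => (hK_subst n).symm)

end Substitution

theorem integral_comp_mul_deriv_of_ae_continuousAt {f φ φ' : ℝ → ℝ} {a b M M₀ : ℝ} (hab : a ≤ b)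
    (hφ : ContinuousOn φ (Icc a b)) (hderiv : ∀ t ∈ Ioo a b, HasDerivAt φ (φ' t) t)
    (hφ' : LocallyIntegrableOn φ' (Ioo a b)) (hf : ∀ x ∈ uIcc (φ a) (φ b), |f x| ≤ M)
    (hfφ : ∀ t ∈ Icc a b, |f (φ t) * φ' t| ≤ M₀)
    (hcont : ∀ᵐ x, x ∈ uIcc (φ a) (φ b) → ContinuousAt f x)
    (hcont_comp : ∀ᵐ t, t ∈ Ioo a b → φ' t ≠ 0 → ContinuousAt f (φ t)) :
    ∫ x in φ a..φ b, f x = ∫ t in a..b, f (φ t) * φ' t := by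
  set h := {x | ContinuousAt f x}.indicator f
  have hh : Measurable h := measurable_indicator_setOf_continuousAt f
  have hhf (x : ℝ) : ‖h x‖ ≤ ‖f x‖ := norm_indicator_le_norm_self f x
  have hhφ : IntegrableOn (fun t => h (φ t) * φ' t) (Icc a b) := by
    refine Integrable.of_bound (aestronglyMeasurable_comp_mul_deriv hφ hφ' hh) M₀
      (ae_restrict_of_forall_mem measurableSet_Icc fun t ht => ?_)
    rw [norm_mul]
    exact (mul_le_mul_of_nonneg_right (hhf _) (norm_nonneg _)).trans (by simpa using hfφ t ht)
  have hh_int : IntervalIntegrable h volume (φ a) (φ b) :=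
    (intervalIntegrable_const (c := M)).mono_fun hh.aestronglyMeasurable <|
      ae_restrict_of_forall_mem measurableSet_uIoc fun x hx =>
        (hhf x).trans ((hf x (uIoc_subset_uIcc hx)).trans (le_abs_self M))
  calc ∫ x in φ a..φ b, f x = ∫ x in φ a..φ b, h x :=
        integral_congr_ae <| hcont.mono fun x hx hxJ =>
          (indicator_of_mem (hx (uIoc_subset_uIcc hxJ)) f).symm
    _ = ∫ t in a..b, h (φ t) * φ' t :=
        (integral_comp_mul_deriv_of_intervalIntegrable hab hφ hderiv hφ' hh hhφ hh_int).symm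
    _ = ∫ t in a..b, f (φ t) * φ' t := by
        refine integral_congr_ae ?_
        filter_upwards [hcont_comp, measure_eq_zero_iff_ae_notMem.1 (measure_singleton b)]
          with t ht htb htI
        rw [uIoc_of_le hab] at htI
        have ht' : t ∈ Ioo a b := ⟨htI.1, htI.2.lt_of_ne htb⟩
        by_cases h0 : φ' t = 0
        · simp [h0]
        · simp only [h, indicator_of_mem (show φ t ∈ {x | ContinuousAt f x} from ht ht' h0)]

theorem stmt8_general (f : ℝ → ℝ)
    (α β : ℝ) (hαβ : α ≤ β) (φ φ' : ℝ → ℝ)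
    (hφc : ContinuousOn φ (Set.Icc α β))
    (hφd : ∀ t ∈ Set.Ioo α β, HasDerivAt φ (φ' t) t)
    (hφ'int : ∀ c d : ℝ, α < c → c ≤ d → d < β → RiemannIntegrableOn φ' (Set.Icc c d))
    (hprod : RiemannIntegrableOn (fun t => f (φ t) * φ' t) (Set.Icc α β))
    (hfJbd : ∃ M, ∀ x ∈ Set.uIcc (φ α) (φ β), |f x| ≤ M) :
    RiemannIntegrableOn f (Set.uIcc (φ α) (φ β)) ∧
    ∫ x in (φ α)..(φ β), f x = ∫ t in α..β, f (φ t) * φ' t := by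
  have hcont_comp : ∀ᵐ t, t ∈ Ioo α β → φ' t ≠ 0 → ContinuousAt f (φ t) := by
    filter_upwards [ae_imp_of_forall_Ioo_subset fun c d hc hcd hd =>
      (hφ'int c d hc hcd hd).ae_continuousAt, hprod.ae_continuousAt] with t hφ't hgt ht hne
    exact continuousAt_of_continuousAt_comp_mul_deriv
      (eventually_of_mem (isOpen_Ioo.mem_nhds ht) hφd) (hφ't ht) hne (hgt ht)
  have hJ : uIcc (φ α) (φ β) ⊆ φ '' Icc α β :=
    uIcc_of_le hαβ ▸ intermediate_value_uIcc (uIcc_of_le hαβ ▸ hφc)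
  have hcont : ∀ᵐ x, x ∈ uIcc (φ α) (φ β) → ContinuousAt f x :=
    (ae_continuousAt_of_ae_continuousAt_comp hφd hcont_comp).mono fun x hx hxJ => hx (hJ hxJ)
  obtain ⟨M, hM⟩ := hfJbd
  obtain ⟨M₀, hM₀⟩ := hprod.1
  refine ⟨⟨⟨M, hM⟩, (ae_restrict_iff' measurableSet_uIcc).2 <|
    hcont.mono fun x hx hxJ => (hx hxJ).continuousWithinAt⟩, ?_⟩
  exact integral_comp_mul_deriv_of_ae_continuousAt hαβ hφc hφd
    (locallyIntegrableOn_Ioo_of_hasDerivAt hφd fun c d hc hcd hd => (hφ'int c d hc hcd hd).1)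
    hM hM₀ hcont hcont_comp

theorem stmt8 (I : Set ℝ) (hI : I.OrdConnected) (f : ℝ → ℝ)
    (α β : ℝ) (hαβ : α ≤ β) (φ φ' : ℝ → ℝ)
    (hmap : ∀ t ∈ Set.Icc α β, φ t ∈ I)
    (hφc : ContinuousOn φ (Set.Icc α β))
    (hφd : ∀ t ∈ Set.Ioo α β, HasDerivAt φ (φ' t) t)
    (hφ'int : ∀ c d : ℝ, α < c → c ≤ d → d < β → RiemannIntegrableOn φ' (Set.Icc c d))
    (hprod : RiemannIntegrableOn (fun t => f (φ t) * φ' t) (Set.Icc α β))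
    (hfJbd : ∃ M, ∀ x ∈ Set.uIcc (φ α) (φ β), |f x| ≤ M) :
    RiemannIntegrableOn f (Set.uIcc (φ α) (φ β)) ∧
    ∫ x in (φ α)..(φ β), f x = ∫ t in α..β, f (φ t) * φ' t :=
  stmt8_general f α β hαβ φ φ' hφc hφd hφ'int hprod hfJbd
end

section
/- Let f : I → ℝ and let φ : [α,β] → I be continuous and differentiable on (α,β). Suppose t ∈ (α,β) is a point at which both φ' and the product (f∘φ)·φ' are continuous, and φ'(t) ≠ 0. Then f is continuous at φ(t). -/
open MeasureTheory Set Filter Topology intervalIntegral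

theorem ContinuousWithinAt.of_mul_of_ne_zero {X 𝕜 : Type*} [TopologicalSpace X] [DivisionRing 𝕜]
    [TopologicalSpace 𝕜] [T1Space 𝕜] [ContinuousMul 𝕜] [ContinuousInv₀ 𝕜]
    {g h : X → 𝕜} {s : Set X} {x : X} (hgh : ContinuousWithinAt (fun y => g y * h y) s x)
    (hh : ContinuousWithinAt h s x) (hx : h x ≠ 0) : ContinuousWithinAt g s x := by
  have hquot : ContinuousWithinAt (fun y => g y * h y / h y) s x := hgh.div hh hx
  refine hquot.congr_of_eventuallyEq ?_ (mul_div_cancel_right₀ _ hx).symm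
  filter_upwards [hh.eventually_ne hx] with y hy
  exact (mul_div_cancel_right₀ _ hy).symm

theorem ContinuousAt.of_comp_of_map_nhds_eq {X Y Z : Type*} [TopologicalSpace X]
    [TopologicalSpace Y] [TopologicalSpace Z] {f : Y → Z} {φ : X → Y} {t : X}
    (hφ : map φ (𝓝 t) = 𝓝 (φ t)) (hfφ : ContinuousAt (f ∘ φ) t) : ContinuousAt f (φ t) := by
  rwa [ContinuousAt, ← hφ, tendsto_map'_iff]

theorem stmt10_general (I : Set ℝ) (f : ℝ → ℝ) (α β : ℝ) (φ φ' : ℝ → ℝ)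
    (hφd : ∀ s ∈ Set.Ioo α β, HasDerivAt φ (φ' s) s)
    (t : ℝ) (ht : t ∈ Set.Ioo α β)
    (h1 : ContinuousWithinAt φ' (Set.Ioo α β) t)
    (h2 : ContinuousWithinAt (fun s => f (φ s) * φ' s) (Set.Ioo α β) t)
    (h3 : φ' t ≠ 0) :
    ContinuousWithinAt f I (φ t) := by
  have hIoo : Ioo α β ∈ 𝓝 t := Ioo_mem_nhds ht.1 ht.2
  have hstrict : HasStrictDerivAt φ (φ' t) t :=
    hasStrictDerivAt_of_hasDerivAt_of_continuousAt (eventually_of_mem hIoo hφd)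
      (h1.continuousAt hIoo)
  have hfφ : ContinuousAt (f ∘ φ) t := (h2.of_mul_of_ne_zero h1 h3).continuousAt hIoo
  exact (hfφ.of_comp_of_map_nhds_eq (hstrict.map_nhds_eq h3)).continuousWithinAt

theorem stmt10 (I : Set ℝ) (f : ℝ → ℝ) (α β : ℝ) (φ φ' : ℝ → ℝ)
    (hmap : ∀ s ∈ Set.Icc α β, φ s ∈ I)
    (hφc : ContinuousOn φ (Set.Icc α β))
    (hφd : ∀ s ∈ Set.Ioo α β, HasDerivAt φ (φ' s) s)
    (t : ℝ) (ht : t ∈ Set.Ioo α β)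
    (h1 : ContinuousWithinAt φ' (Set.Ioo α β) t)
    (h2 : ContinuousWithinAt (fun s => f (φ s) * φ' s) (Set.Ioo α β) t)
    (h3 : φ' t ≠ 0) :
    ContinuousWithinAt f I (φ t) :=
  stmt10_general I f α β φ φ' hφd t ht h1 h2 h3
end

section
/- Let φ : [α,β] → I ⊆ ℝ be continuous and let J be the closed interval with endpoints φ(α), φ(β). If the set φ⁻¹({φ(α), φ(β)}) has Lebesgue measure zero, then the characteristic function of φ⁻¹(J), as a function on [α,β], is Riemann integrable; more precisely, its set of discontinuity points is contained in φ⁻¹({φ(α), φ(β)}). -/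
open MeasureTheory Set Filter Topology intervalIntegral

/-!
The indicator of `J` is locally constant off its frontier `{φ α, φ β}`, so its composition with
the continuous `φ` can only jump at points of `φ ⁻¹' {φ α, φ β}`. That set is null by assumption,
and Lebesgue's criterion applies to the bounded function.
-/

theorem frontier_uIcc {α : Type*} [LinearOrder α] [TopologicalSpace α] [OrderTopology α]
    [DenselyOrdered α] [NoMinOrder α] [NoMaxOrder α] (a b : α) :
    frontier (uIcc a b) = {a, b} := by
  rcases le_total a b with h | h
  · rw [uIcc_of_le h, frontier_Icc h]
  · rw [uIcc_of_ge h, frontier_Icc h, pair_comm]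

theorem continuousAt_indicator_const_of_notMem_frontier {X M : Type*} [TopologicalSpace X]
    [TopologicalSpace M] [Zero M] {s : Set X} {c : M} {x : X} (hx : x ∉ frontier s) :
    ContinuousAt (s.indicator fun _ => c) x := by
  classical
  have hcont : ContinuousOn (s.indicator fun _ => c) (frontier s)ᶜ := by
    rw [← piecewise_eq_indicator]
    exact ContinuousOn.piecewise (fun a ha => absurd ha.2 ha.1) continuousOn_const
      continuousOn_const
  exact hcont.continuousAt (isClosed_frontier.isOpen_compl.mem_nhds hx)

theorem ContinuousWithinAt.indicator_const_comp_of_notMem_frontier {X Y M : Type*}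
    [TopologicalSpace X] [TopologicalSpace Y] [TopologicalSpace M] [Zero M] {s : Set Y} {c : M}
    {φ : X → Y} {S : Set X} {x : X} (hφ : ContinuousWithinAt φ S x) (hx : φ x ∉ frontier s) :
    ContinuousWithinAt (fun y => s.indicator (fun _ => c) (φ y)) S x :=
  (continuousAt_indicator_const_of_notMem_frontier hx).comp_continuousWithinAt hφ

theorem riemannIntegrableOn_of_volume_discontinuities_eq_zero {f : ℝ → ℝ} {s : Set ℝ} {M : ℝ}
    (hs : MeasurableSet s) (hM : ∀ x ∈ s, |f x| ≤ M)
    (hdisc : volume {x ∈ s | ¬ ContinuousWithinAt f s x} = 0) :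
    RiemannIntegrableOn f s := by
  refine ⟨⟨M, hM⟩, ?_⟩
  rwa [ae_iff, Measure.restrict_apply' hs, inter_comm]

theorem stmt13_general (α β : ℝ) (φ : ℝ → ℝ)
    (hφc : ContinuousOn φ (Set.Icc α β))
    (hpre : volume {t ∈ Set.Icc α β | φ t = φ α ∨ φ t = φ β} = 0) :
    {t ∈ Set.Icc α β | ¬ ContinuousWithinAt
        (fun s => Set.indicator (Set.uIcc (φ α) (φ β)) (fun _ => (1 : ℝ)) (φ s)) (Set.Icc α β) t}
      ⊆ {t ∈ Set.Icc α β | φ t = φ α ∨ φ t = φ β} ∧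
    RiemannIntegrableOn (fun s => Set.indicator (Set.uIcc (φ α) (φ β)) (fun _ => (1 : ℝ)) (φ s))
      (Set.Icc α β) := by
  have hdisc : {t ∈ Set.Icc α β | ¬ ContinuousWithinAt
        (fun s => Set.indicator (Set.uIcc (φ α) (φ β)) (fun _ => (1 : ℝ)) (φ s)) (Set.Icc α β) t}
      ⊆ {t ∈ Set.Icc α β | φ t = φ α ∨ φ t = φ β} := by
    rintro t ⟨ht, hdiscont⟩
    refine ⟨ht, by_contra fun hne => hdiscont ?_⟩
    refine (hφc t ht).indicator_const_comp_of_notMem_frontier ?_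
    rwa [frontier_uIcc]
  have hbound : ∀ t ∈ Set.Icc α β,
      |Set.indicator (Set.uIcc (φ α) (φ β)) (fun _ => (1 : ℝ)) (φ t)| ≤ 1 := fun t _ => by
    simpa using norm_indicator_le_norm_self (fun _ => (1 : ℝ)) (φ t)
  exact ⟨hdisc, riemannIntegrableOn_of_volume_discontinuities_eq_zero measurableSet_Icc hbound
    (measure_mono_null hdisc hpre)⟩

theorem stmt13 (I : Set ℝ) (hI : I.OrdConnected) (α β : ℝ) (hαβ : α ≤ β) (φ : ℝ → ℝ)
    (hmap : ∀ t ∈ Set.Icc α β, φ t ∈ I)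
    (hφc : ContinuousOn φ (Set.Icc α β))
    (hpre : volume {t ∈ Set.Icc α β | φ t = φ α ∨ φ t = φ β} = 0) :
    {t ∈ Set.Icc α β | ¬ ContinuousWithinAt
        (fun s => Set.indicator (Set.uIcc (φ α) (φ β)) (fun _ => (1 : ℝ)) (φ s)) (Set.Icc α β) t}
      ⊆ {t ∈ Set.Icc α β | φ t = φ α ∨ φ t = φ β} ∧
    RiemannIntegrableOn (fun s => Set.indicator (Set.uIcc (φ α) (φ β)) (fun _ => (1 : ℝ)) (φ s))
      (Set.Icc α β) :=
  stmt13_general α β φ hφc hpre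
end

section
/- For every bounded nonnegative function f : [a,b] → [0,∞), there exists a sequence of continuous, piecewise linear functions fₙ : [a,b] → [0,∞) with 0 ≤ fₙ ≤ f for all n, such that fₙ(p) → f(p) at every point p where f is continuous. -/
/-!
On the grid `a + hℤ` give the node `a + kh` the value `v k`, the infimum of `f` over
`[a, b] ∩ [a + (k-1)h, a + (k+1)h]`, and interpolate linearly. On a cell `[a + kh, a + (k+1)h]`
the interpolant is a convex combination of `v k` and `v (k+1)`, and both infima are taken over
sets containing the cell, so `0 ≤ F ≤ f`. At a continuity point `p`, both infima see only
values of `f` within distance `2h` of `p`, hence they tend to `f p` as `h → 0`.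
-/

open MeasureTheory Set Filter Topology intervalIntegral

/-- `g` is continuous piecewise linear on `[a, b]`: there is a finite partition of
`[a, b]` such that `g` is affine on each subinterval. -/
def PiecewiseLinearOn (g : ℝ → ℝ) (a b : ℝ) : Prop :=
  ∃ n : ℕ, ∃ x : ℕ → ℝ, x 0 = a ∧ x n = b ∧ (∀ i < n, x i ≤ x (i + 1)) ∧
    ∀ i < n, ∃ c d : ℝ, ∀ t ∈ Set.Icc (x i) (x (i + 1)), g t = c * t + d

theorem PiecewiseLinearOn.continuousOn {g : ℝ → ℝ} {a b : ℝ} (hg : PiecewiseLinearOn g a b) :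
    ContinuousOn g (Icc a b) := by
  obtain ⟨n, x, rfl, rfl, -, haff⟩ := hg
  induction n with
  | zero => simp
  | succ n ih =>
    refine ((ih fun i hi => haff i (by omega)).union_of_isClosed ?_ isClosed_Icc
      isClosed_Icc).mono Icc_subset_Icc_union_Icc
    obtain ⟨c, d, hcd⟩ := haff n n.lt_succ_self
    exact ((continuous_const.mul continuous_id).add continuous_const).continuousOn.congr hcd

noncomputable def intLerp (v : ℤ → ℝ) (σ : ℝ) : ℝ :=
  v ⌊σ⌋ + Int.fract σ * (v (⌊σ⌋ + 1) - v ⌊σ⌋)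

section intLerp

variable {v : ℤ → ℝ} {σ c : ℝ}

theorem intLerp_eq_of_mem_Icc {k : ℤ} (hσ : σ ∈ Icc (k : ℝ) (k + 1)) :
    intLerp v σ = v k + (σ - k) * (v (k + 1) - v k) := by
  rcases hσ.2.lt_or_eq with hlt | rfl
  · have hk : ⌊σ⌋ = k := Int.floor_eq_iff.2 ⟨hσ.1, hlt⟩
    rw [intLerp, ← Int.self_sub_floor, hk]
  · have hk : ⌊(k : ℝ) + 1⌋ = k + 1 := by exact_mod_cast Int.floor_intCast (k + 1)
    simp only [intLerp, hk, Int.fract_add_one, Int.fract_intCast]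
    ring

theorem le_intLerp (h₀ : c ≤ v ⌊σ⌋) (h₁ : c ≤ v (⌊σ⌋ + 1)) : c ≤ intLerp v σ := by
  have := Int.fract_nonneg σ
  have := Int.fract_lt_one σ
  unfold intLerp
  nlinarith

theorem intLerp_le (h₀ : v ⌊σ⌋ ≤ c) (h₁ : v (⌊σ⌋ + 1) ≤ c) : intLerp v σ ≤ c := by
  have := Int.fract_nonneg σ
  have := Int.fract_lt_one σ
  unfold intLerp
  nlinarith

end intLerp

noncomputable def gridInf (f : ℝ → ℝ) (s : Set ℝ) (a h : ℝ) (k : ℤ) : ℝ :=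
  sInf (f '' (s ∩ Icc (a + (k - 1) * h) (a + (k + 1) * h)))

noncomputable def lowerLerp (f : ℝ → ℝ) (s : Set ℝ) (a h t : ℝ) : ℝ :=
  intLerp (gridInf f s a h) ((t - a) / h)

section lowerLerp

variable {f : ℝ → ℝ} {s : Set ℝ} {a h t c : ℝ}

theorem mem_Icc_grid_iff (hh : 0 < h) {x y : ℝ} :
    t ∈ Icc (a + x * h) (a + y * h) ↔ (t - a) / h ∈ Icc x y := by
  simp only [mem_Icc, le_div_iff₀ hh, div_le_iff₀ hh]
  constructor <;> rintro ⟨h₁, h₂⟩ <;> constructor <;> linarith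

theorem mem_Icc_grid_floor (hh : 0 < h) {j : ℤ}
    (hj : j = ⌊(t - a) / h⌋ ∨ j = ⌊(t - a) / h⌋ + 1) :
    t ∈ Icc (a + (j - 1) * h) (a + (j + 1) * h) := by
  rw [mem_Icc_grid_iff hh]
  have := Int.floor_le ((t - a) / h)
  have := Int.lt_floor_add_one ((t - a) / h)
  rcases hj with rfl | rfl <;> push_cast <;> constructor <;> linarith

theorem gridInf_nonneg (hf : ∀ x ∈ s, 0 ≤ f x) (k : ℤ) : 0 ≤ gridInf f s a h k :=
  Real.sInf_nonneg (forall_mem_image.2 fun x hx => hf x hx.1)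

theorem lowerLerp_nonneg (hf : ∀ x ∈ s, 0 ≤ f x) : 0 ≤ lowerLerp f s a h t :=
  le_intLerp (gridInf_nonneg hf _) (gridInf_nonneg hf _)

theorem lowerLerp_le_self (hh : 0 < h) (hbdd : BddBelow (f '' s)) (ht : t ∈ s) :
    lowerLerp f s a h t ≤ f t := by
  have key : ∀ j : ℤ, (j = ⌊(t - a) / h⌋ ∨ j = ⌊(t - a) / h⌋ + 1) → gridInf f s a h j ≤ f t :=
    fun j hj => csInf_le (hbdd.mono (image_mono inter_subset_left))
      ⟨t, ⟨ht, mem_Icc_grid_floor hh hj⟩, rfl⟩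
  exact intLerp_le (key _ (.inl rfl)) (key _ (.inr rfl))

theorem le_lowerLerp (hh : 0 < h) (ht : t ∈ s) (hc : ∀ q ∈ s, dist q t ≤ 2 * h → c ≤ f q) :
    c ≤ lowerLerp f s a h t := by
  have key : ∀ j : ℤ, (j = ⌊(t - a) / h⌋ ∨ j = ⌊(t - a) / h⌋ + 1) → c ≤ gridInf f s a h j := by
    intro j hj
    have htj := mem_Icc_grid_floor hh hj
    refine le_csInf ⟨f t, t, ⟨ht, htj⟩, rfl⟩ (forall_mem_image.2 fun q ⟨hq, hqj⟩ => hc q hq ?_)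
    exact (Real.dist_le_of_mem_Icc hqj htj).trans_eq (by ring)
  exact le_intLerp (key _ (.inl rfl)) (key _ (.inr rfl))

theorem lowerLerp_affine_on_cell (hh : 0 < h) (k : ℤ) :
    ∃ c d : ℝ, ∀ t ∈ Icc (a + k * h) (a + (k + 1) * h), lowerLerp f s a h t = c * t + d := by
  set v := gridInf f s a h
  refine ⟨(v (k + 1) - v k) / h, v k - (a / h + k) * (v (k + 1) - v k), fun t ht => ?_⟩
  rw [lowerLerp, intLerp_eq_of_mem_Icc ((mem_Icc_grid_iff hh).1 ht)]
  ring

theorem piecewiseLinearOn_lowerLerp (hh : 0 < h) {b : ℝ} (N : ℕ) (hN : a + N * h = b) :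
    PiecewiseLinearOn (lowerLerp f s a h) a b := by
  refine ⟨N, fun i => a + i * h, by simp, hN, fun i _ => ?_, fun i _ => ?_⟩
  · push_cast
    linarith
  · simpa using lowerLerp_affine_on_cell (f := f) (s := s) hh i

theorem tendsto_lowerLerp {p : ℝ} (hbdd : BddBelow (f '' s)) (hp : p ∈ s)
    (hfp : ContinuousWithinAt f s p) {h : ℕ → ℝ} (hpos : ∀ n, 0 < h n)
    (hlim : Tendsto h atTop (𝓝 0)) :
    Tendsto (fun n => lowerLerp f s a (h n) p) atTop (𝓝 (f p)) := by
  refine tendsto_order.2 ⟨fun y hy => ?_, fun y hy => .of_forall fun n =>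
    (lowerLerp_le_self (hpos n) hbdd hp).trans_lt hy⟩
  obtain ⟨y', hyy', hy'⟩ := exists_between hy
  obtain ⟨ε, hε, hball⟩ := Metric.mem_nhdsWithin_iff.1 (hfp.eventually_const_lt hy')
  filter_upwards [hlim.eventually_lt_const (half_pos hε)] with n hn
  refine hyy'.trans_le (le_lowerLerp (hpos n) hp fun q hq hqp => (hball ⟨?_, hq⟩).le)
  exact Metric.mem_ball.2 (by linarith)

end lowerLerp

theorem exists_uniform_meshes_tendsto_zero {a b : ℝ} (hab : a ≤ b) :
    ∃ h : ℕ → ℝ, (∀ n, 0 < h n) ∧ Tendsto h atTop (𝓝 0) ∧ ∀ n, ∃ N : ℕ, a + N * h n = b := by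
  rcases hab.eq_or_lt with rfl | hab
  · exact ⟨fun n => 1 / (n + 1), fun n => by positivity,
      tendsto_one_div_add_atTop_nhds_zero_nat, fun n => ⟨0, by simp⟩⟩
  refine ⟨fun n => (b - a) * (1 / (n + 1)), fun n => by have := sub_pos.2 hab; positivity,
    by simpa using tendsto_one_div_add_atTop_nhds_zero_nat.const_mul (b - a),
    fun n => ⟨n + 1, by push_cast; field_simp; ring⟩⟩

theorem stmt15_general (a b : ℝ) (hab : a ≤ b) (f : ℝ → ℝ)
    (hf0 : ∀ x ∈ Set.Icc a b, 0 ≤ f x) :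
    ∃ F : ℕ → ℝ → ℝ,
      (∀ n, ContinuousOn (F n) (Set.Icc a b)) ∧
      (∀ n, PiecewiseLinearOn (F n) a b) ∧
      (∀ n, ∀ x ∈ Set.Icc a b, 0 ≤ F n x ∧ F n x ≤ f x) ∧
      ∀ p ∈ Set.Icc a b, ContinuousWithinAt f (Set.Icc a b) p →
        Tendsto (fun n => F n p) atTop (𝓝 (f p)) := by
  obtain ⟨h, hpos, hlim, hgrid⟩ := exists_uniform_meshes_tendsto_zero hab
  have hbdd : BddBelow (f '' Icc a b) := ⟨0, forall_mem_image.2 hf0⟩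
  have hpl : ∀ n, PiecewiseLinearOn (lowerLerp f (Icc a b) a (h n)) a b := fun n =>
    let ⟨N, hN⟩ := hgrid n
    piecewiseLinearOn_lowerLerp (hpos n) N hN
  exact ⟨fun n => lowerLerp f (Icc a b) a (h n), fun n => (hpl n).continuousOn, hpl,
    fun n t ht => ⟨lowerLerp_nonneg hf0, lowerLerp_le_self (hpos n) hbdd ht⟩,
    fun p hp hfp => tendsto_lowerLerp hbdd hp hfp hpos hlim⟩

theorem stmt15 (a b : ℝ) (hab : a ≤ b) (f : ℝ → ℝ)
    (hf0 : ∀ x ∈ Set.Icc a b, 0 ≤ f x) (hbd : ∃ M, ∀ x ∈ Set.Icc a b, f x ≤ M) :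
    ∃ F : ℕ → ℝ → ℝ,
      (∀ n, ContinuousOn (F n) (Set.Icc a b)) ∧
      (∀ n, PiecewiseLinearOn (F n) a b) ∧
      (∀ n, ∀ x ∈ Set.Icc a b, 0 ≤ F n x ∧ F n x ≤ f x) ∧
      ∀ p ∈ Set.Icc a b, ContinuousWithinAt f (Set.Icc a b) p →
        Tendsto (fun n => F n p) atTop (𝓝 (f p)) :=
  stmt15_general a b hab f hf0
end

section
/- Define φ : [0, 2/π] → ℝ by φ(t) = t·sin(1/t) for t > 0 and φ(0) = 0, and f(x) = x³. Then the function t ↦ f(φ(t))·φ'(t) = t³ sin³(1/t)·(sin(1/t) − (1/t)cos(1/t)) (defined arbitrarily at t = 0) is Riemann integrable on [0, 2/π], and ∫_0^{2/π} [φ(t)]³ φ'(t) dt = 4/π⁴, while φ' is unbounded on (0, 2/π) and hence not Riemann integrable on [0, 2/π]. -/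
/-! The primitive of `φ³ φ'` is `φ⁴ / 4`, which is continuous on the whole interval because
`|φ t| ≤ |t|`; the fundamental theorem of calculus applies since the integrand is bounded
(by `|t|³ + |t|²`). On the other hand `φ'(1 / (2πn)) = -2πn`, so `φ'` is unbounded near `0`. -/

open MeasureTheory Set Filter Topology intervalIntegral

open Real

noncomputable def phi (t : ℝ) : ℝ := t * sin (1 / t)

noncomputable def phiDeriv (t : ℝ) : ℝ := sin (1 / t) - (1 / t) * cos (1 / t)

theorem RiemannIntegrableOn.of_countable_not_continuousAt {f : ℝ → ℝ} {s S : Set ℝ}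
    (hbdd : ∃ M, ∀ x ∈ s, |f x| ≤ M) (hS : S.Countable) (hcont : ∀ x ∉ S, ContinuousAt f x) :
    RiemannIntegrableOn f s :=
  ⟨hbdd, ae_restrict_of_ae <| (hS.ae_notMem volume).mono
    fun x hx => (hcont x hx).continuousWithinAt⟩

theorem abs_phi_le (t : ℝ) : |phi t| ≤ |t| := by
  rw [phi, abs_mul]
  exact mul_le_of_le_one_right (abs_nonneg t) (abs_sin_le_one _)

theorem continuous_phi : Continuous phi := by
  rw [continuous_iff_continuousAt]
  intro x
  rcases eq_or_ne x 0 with rfl | hx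
  · have h0 : phi 0 = 0 := by simp [phi]
    rw [ContinuousAt, h0]
    exact squeeze_zero_norm abs_phi_le (by simpa using continuous_abs.tendsto (0 : ℝ))
  · unfold phi
    fun_prop (disch := assumption)

theorem hasDerivAt_phi {x : ℝ} (hx : x ≠ 0) : HasDerivAt phi (phiDeriv x) x := by
  have hinv : HasDerivAt (fun t : ℝ => 1 / t) (-(1 / x ^ 2)) x := by
    simpa [one_div] using hasDerivAt_inv hx
  refine ((hasDerivAt_id x).mul ((hasDerivAt_sin (1 / x)).comp x hinv)).congr_deriv ?_
  simp only [phiDeriv, id, Function.comp_apply]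
  field_simp
  ring

theorem continuousAt_phiDeriv {x : ℝ} (hx : x ≠ 0) : ContinuousAt phiDeriv x := by
  unfold phiDeriv
  fun_prop (disch := assumption)

theorem abs_phiDeriv_le (t : ℝ) : |phiDeriv t| ≤ 1 + |t|⁻¹ := by
  calc |phiDeriv t| ≤ |sin (1 / t)| + |1 / t| * |cos (1 / t)| := by
        rw [phiDeriv, ← abs_mul]; exact abs_sub _ _
    _ ≤ 1 + |t|⁻¹ * 1 := by
        rw [one_div, abs_inv]
        gcongr
        exacts [abs_sin_le_one _, abs_cos_le_one _]
    _ = 1 + |t|⁻¹ := by rw [mul_one]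

theorem abs_phi_pow_three_mul_phiDeriv_le (t : ℝ) :
    |phi t ^ 3 * phiDeriv t| ≤ |t| ^ 3 + |t| ^ 2 := by
  rcases eq_or_ne t 0 with rfl | ht
  · simp [phi]
  calc |phi t ^ 3 * phiDeriv t| = |phi t| ^ 3 * |phiDeriv t| := by rw [abs_mul, abs_pow]
    _ ≤ |t| ^ 3 * (1 + |t|⁻¹) := by
        gcongr ?_ ^ 3 * ?_
        exacts [abs_phi_le t, abs_phiDeriv_le t]
    _ = |t| ^ 3 + |t| ^ 2 := by field_simp

theorem riemannIntegrableOn_phi_pow_three_mul_phiDeriv (a b : ℝ) :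
    RiemannIntegrableOn (fun t => phi t ^ 3 * phiDeriv t) (Icc a b) := by
  refine .of_countable_not_continuousAt ⟨max |a| |b| ^ 3 + max |a| |b| ^ 2, fun t ht => ?_⟩
    (countable_singleton 0) fun x hx => ?_
  · have hle : |t| ≤ max |a| |b| := abs_le_max_abs_abs ht.1 ht.2
    exact (abs_phi_pow_three_mul_phiDeriv_le t).trans (by gcongr)
  · exact (continuous_phi.continuousAt.pow 3).mul (continuousAt_phiDeriv hx)

theorem intervalIntegrable_phi_pow_three_mul_phiDeriv (a b : ℝ) :
    IntervalIntegrable (fun t => phi t ^ 3 * phiDeriv t) volume a b := by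
  refine IntervalIntegrable.mono_fun' (g := fun t => |t| ^ 3 + |t| ^ 2)
    ((by fun_prop : Continuous fun t : ℝ => |t| ^ 3 + |t| ^ 2).intervalIntegrable a b) ?_
    (.of_forall abs_phi_pow_three_mul_phiDeriv_le)
  have : Measurable phiDeriv := by unfold phiDeriv; fun_prop
  exact ((continuous_phi.measurable.pow_const 3).mul this).aestronglyMeasurable

theorem integral_phi_pow_three_mul_phiDeriv (b : ℝ) :
    ∫ t in (0 : ℝ)..b, phi t ^ 3 * phiDeriv t = phi b ^ 4 / 4 := by
  have hderiv : ∀ x ≠ 0, HasDerivAt (fun t => phi t ^ 4 / 4) (phi x ^ 3 * phiDeriv x) x :=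
    fun x hx => (((hasDerivAt_phi hx).pow 4).div_const 4).congr_deriv (by norm_num; ring)
  rw [integral_eq_sub_of_hasDeriv_right ((continuous_phi.pow 4).div_const 4).continuousOn
    (fun x hx => (hderiv x ?_).hasDerivWithinAt) (intervalIntegrable_phi_pow_three_mul_phiDeriv 0 b)]
  · simp [phi]
  · rintro rfl
    rcases le_total 0 b with hb | hb <;> simp_all

theorem phiDeriv_inv (x : ℝ) : phiDeriv x⁻¹ = sin x - x * cos x := by
  simp [phiDeriv]

theorem phiDeriv_inv_two_pi_mul_natCast (n : ℕ) : phiDeriv (2 * π * n)⁻¹ = -(2 * π * n) := by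
  have hsin : sin (n * (2 * π)) = 0 := by simpa using sin_nat_mul_two_pi_sub 0 n
  rw [phiDeriv_inv, mul_comm (2 * π), hsin, cos_nat_mul_two_pi]
  ring

theorem not_bounded_phiDeriv {a : ℝ} (ha : 0 < a) :
    ¬ ∃ M, ∀ t ∈ Ioo 0 a, |phiDeriv t| ≤ M := by
  rintro ⟨M, hM⟩
  obtain ⟨n, hn⟩ := exists_nat_gt (max M a⁻¹)
  have hn_pos : (0 : ℝ) < n := (lt_max_of_lt_right (inv_pos.2 ha)).trans hn
  have hn_le : (n : ℝ) ≤ 2 * π * n := le_mul_of_one_le_left hn_pos.le (by linarith [pi_gt_three])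
  have hmem : (2 * π * n)⁻¹ ∈ Ioo 0 a := by
    refine ⟨by positivity, inv_lt_of_inv_lt₀ ha ?_⟩
    linarith [le_max_right M a⁻¹]
  have := hM _ hmem
  rw [phiDeriv_inv_two_pi_mul_natCast, abs_neg, abs_of_pos (by positivity)] at this
  linarith [le_max_left M a⁻¹]

theorem not_riemannIntegrableOn_phiDeriv {a : ℝ} (ha : 0 < a) :
    ¬ RiemannIntegrableOn phiDeriv (Icc 0 a) := fun h =>
  let ⟨M, hM⟩ := h.1
  not_bounded_phiDeriv ha ⟨M, fun t ht => hM t (Ioo_subset_Icc_self ht)⟩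

theorem stmt17 :
    RiemannIntegrableOn
      (fun t => (t * Real.sin (1 / t)) ^ 3 *
        (Real.sin (1 / t) - (1 / t) * Real.cos (1 / t)))
      (Set.Icc 0 (2 / Real.pi)) ∧
    (∫ t in (0 : ℝ)..(2 / Real.pi),
        (t * Real.sin (1 / t)) ^ 3 *
          (Real.sin (1 / t) - (1 / t) * Real.cos (1 / t))) = 4 / Real.pi ^ 4 ∧
    (¬ ∃ M, ∀ t ∈ Set.Ioo (0 : ℝ) (2 / Real.pi),
        |Real.sin (1 / t) - (1 / t) * Real.cos (1 / t)| ≤ M) ∧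
    ¬ RiemannIntegrableOn (fun t => Real.sin (1 / t) - (1 / t) * Real.cos (1 / t))
      (Set.Icc 0 (2 / Real.pi)) := by
  have ha : 0 < 2 / π := by positivity
  have hphi : phi (2 / π) = 2 / π := by
    rw [phi, one_div_div, sin_pi_div_two, mul_one]
  refine ⟨riemannIntegrableOn_phi_pow_three_mul_phiDeriv 0 (2 / π), ?_,
    not_bounded_phiDeriv ha, not_riemannIntegrableOn_phiDeriv ha⟩
  change ∫ t in (0 : ℝ)..2 / π, phi t ^ 3 * phiDeriv t = _
  rw [integral_phi_pow_three_mul_phiDeriv, hphi]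
  field_simp
  ring
end

section
/- Let φ : [0,1] → [0,1] be a strictly increasing homeomorphism whose derivative φ' exists everywhere, is bounded, and vanishes on a dense subset of [0,1] (a Pompeiu-type function). Then there is no function f : [0,1] → ℝ with f ≠ 0 almost everywhere such that both f and (f∘φ)·φ' are Riemann integrable on [0,1]. Equivalently: if f and (f∘φ)·φ' are both Riemann integrable on [0,1] for such a φ, then f = 0 on a set of positive measure. -/
/-!
Suppose `f` vanished only on a null set. The product `g = (f ∘ φ) * φ'` is continuous at almost
every point and vanishes on the dense set `D`, so `g = 0` almost everywhere. Where `f (φ t) ≠ 0`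
this forces `φ' t = 0`; the remaining points form the preimage under `φ` of a null set, on which
`φ' = 0` almost everywhere by the change of variables formula (Serrin–Varberg). Hence `φ' = 0`
almost everywhere, contradicting the fundamental theorem of calculus `∫₀¹ φ' = φ 1 - φ 0 = 1`.
-/

open MeasureTheory Set Filter Topology intervalIntegral

theorem ae_restrict_eq_of_continuousWithinAt_of_eqOn_dense {X Y : Type*} [TopologicalSpace X]
    [MeasurableSpace X] [TopologicalSpace Y] [T2Space Y] {μ : Measure X} {g : X → Y}
    {s D : Set X} {c : Y} (hs : MeasurableSet s)
    (hg : ∀ᵐ x ∂μ.restrict s, ContinuousWithinAt g s x) (hD : D ⊆ s)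
    (hDs : s ⊆ closure D) (hgD : ∀ x ∈ D, g x = c) :
    ∀ᵐ x ∂μ.restrict s, g x = c := by
  filter_upwards [hg, ae_restrict_mem hs] with x hgx hx
  have : (𝓝[D] x).NeBot := mem_closure_iff_nhdsWithin_neBot.1 (hDs hx)
  exact tendsto_nhds_unique (hgx.mono_left (nhdsWithin_mono x hD))
    (tendsto_const_nhds.congr' (eventually_nhdsWithin_of_forall fun y hy => (hgD y hy).symm))

theorem ContinuousOn.measurableSet_inter_preimage {α β : Type*} [TopologicalSpace α]
    [MeasurableSpace α] [OpensMeasurableSpace α] [TopologicalSpace β] [MeasurableSpace β]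
    [BorelSpace β] {f : α → β} {s : Set α} {t : Set β} (hf : ContinuousOn f s)
    (hs : MeasurableSet s) (ht : MeasurableSet t) : MeasurableSet (s ∩ f ⁻¹' t) := by
  rw [← Subtype.image_preimage_coe]
  exact (MeasurableEmbedding.subtype_coe hs).measurableSet_image.2
    ((continuousOn_iff_continuous_domRestrict.1 hf).measurable ht)

section SerrinVarberg

variable {f f' : ℝ → ℝ} {s : Set ℝ}

theorem ae_restrict_deriv_eq_zero_of_volume_image_eq_zero (hs : MeasurableSet s)
    (hf' : ∀ x ∈ s, HasDerivWithinAt f (f' x) s x) (hf : InjOn f s)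
    (himg : volume (f '' s) = 0) : ∀ᵐ x ∂volume.restrict s, f' x = 0 := by
  have hmeas : AEMeasurable f' (volume.restrict s) := by
    convert (ContinuousLinearMap.apply ℝ ℝ (1 : ℝ)).measurable.comp_aemeasurable
      (aemeasurable_fderivWithin volume hs fun x hx => (hf' x hx).hasFDerivWithinAt) using 1
    ext x
    simp
  have hint : ∫⁻ x in s, ENNReal.ofReal |f' x| = 0 := by
    simpa [himg] using (lintegral_image_eq_lintegral_abs_deriv_mul hs hf' hf 1).symm
  filter_upwards [(lintegral_eq_zero_iff' hmeas.abs.ennreal_ofReal).1 hint] with x hx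
  simpa using hx

theorem ae_restrict_deriv_eq_zero_of_mem_null (hs : MeasurableSet s)
    (hf' : ∀ x ∈ s, HasDerivWithinAt f (f' x) s x) (hf : InjOn f s) {N : Set ℝ}
    (hN : volume N = 0) : ∀ᵐ x ∂volume.restrict s, f x ∈ N → f' x = 0 := by
  set u := s ∩ f ⁻¹' toMeasurable volume N
  have hu : MeasurableSet u := ContinuousOn.measurableSet_inter_preimage
    (fun x hx => (hf' x hx).continuousWithinAt) hs (measurableSet_toMeasurable _ _)
  have himg : volume (f '' u) = 0 := by
    refine measure_mono_null ?_ ((measure_toMeasurable N).trans hN)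
    rw [image_inter_preimage]
    exact inter_subset_right
  have hu0 := ae_restrict_deriv_eq_zero_of_volume_image_eq_zero hu
    (fun x hx => (hf' x hx.1).mono inter_subset_left) (hf.mono inter_subset_left) himg
  rw [ae_restrict_iff' hu] at hu0
  rw [ae_restrict_iff' hs]
  filter_upwards [hu0] with x hx hxs hxN
  exact hx ⟨hxs, subset_toMeasurable _ _ hxN⟩

end SerrinVarberg

theorem ae_restrict_deriv_eq_zero_of_mul_comp_ae_eq_zero {f φ φ' : ℝ → ℝ} {s t : Set ℝ}
    (hs : MeasurableSet s) (hφ' : ∀ x ∈ s, HasDerivWithinAt φ (φ' x) s x) (hinj : InjOn φ s)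
    (hmaps : MapsTo φ s t) (hf : volume {y ∈ t | f y = 0} = 0)
    (hprod : ∀ᵐ x ∂volume.restrict s, f (φ x) * φ' x = 0) :
    ∀ᵐ x ∂volume.restrict s, φ' x = 0 := by
  filter_upwards [hprod, ae_restrict_deriv_eq_zero_of_mem_null hs hφ' hinj hf,
    ae_restrict_mem hs] with x hx hN hxs
  rcases mul_eq_zero.1 hx with h | h
  · exact hN ⟨hmaps hxs, h⟩
  · exact h

theorem eq_of_hasDerivWithinAt_Icc_of_ae_eq_zero {φ φ' : ℝ → ℝ} {a b : ℝ} (hab : a ≤ b)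
    (hφ : ∀ x ∈ Icc a b, HasDerivWithinAt φ (φ' x) (Icc a b) x)
    (h0 : ∀ᵐ x ∂volume.restrict (Icc a b), φ' x = 0) : φ a = φ b := by
  have hint : IntervalIntegrable φ' volume a b := by
    have hIcc : IntegrableOn φ' (Icc a b) := (integrable_zero _ _ _).congr (EventuallyEq.symm h0)
    rw [intervalIntegrable_iff_integrableOn_Ioc_of_le hab]
    exact hIcc.mono_set Ioc_subset_Icc_self
  have hftc := integral_eq_sub_of_hasDeriv_right_of_le hab
    (fun x hx => (hφ x hx).continuousWithinAt)
    (fun x hx => ((hφ x (Ioo_subset_Icc_self hx)).hasDerivAt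
      (Icc_mem_nhds hx.1 hx.2)).hasDerivWithinAt) hint
  have hzero : ∫ x in a..b, φ' x = 0 := by
    rw [integral_of_le hab]
    exact integral_eq_zero_of_ae (ae_restrict_of_ae_restrict_of_subset Ioc_subset_Icc_self h0)
  linarith

theorem stmt19_general (φ φ' : ℝ → ℝ)
    (hmono : StrictMonoOn φ (Set.Icc 0 1))
    (hbij : Set.BijOn φ (Set.Icc (0 : ℝ) 1) (Set.Icc (0 : ℝ) 1))
    (hφ0 : φ 0 = 0) (hφ1 : φ 1 = 1)
    (hder : ∀ t ∈ Set.Icc (0 : ℝ) 1, HasDerivWithinAt φ (φ' t) (Set.Icc 0 1) t)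
    (D : Set ℝ) (hD : D ⊆ Set.Icc 0 1) (hDdense : Set.Icc (0 : ℝ) 1 ⊆ closure D)
    (hD0 : ∀ t ∈ D, φ' t = 0)
    (f : ℝ → ℝ)
    (hprod : RiemannIntegrableOn (fun t => f (φ t) * φ' t) (Set.Icc 0 1)) :
    0 < volume {x ∈ Set.Icc (0 : ℝ) 1 | f x = 0} := by
  by_contra hpos
  have hnull : volume {x ∈ Icc (0 : ℝ) 1 | f x = 0} = 0 := nonpos_iff_eq_zero.1 (not_lt.1 hpos)
  have hprod0 : ∀ᵐ t ∂volume.restrict (Icc 0 1), f (φ t) * φ' t = 0 :=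
    ae_restrict_eq_of_continuousWithinAt_of_eqOn_dense measurableSet_Icc hprod.2 hD hDdense
      fun t ht => by simp [hD0 t ht]
  have hφ'0 := ae_restrict_deriv_eq_zero_of_mul_comp_ae_eq_zero measurableSet_Icc hder
    hmono.injOn hbij.mapsTo hnull hprod0
  have h01 := eq_of_hasDerivWithinAt_Icc_of_ae_eq_zero zero_le_one hder hφ'0
  rw [hφ0, hφ1] at h01
  exact zero_ne_one h01

theorem stmt19 (φ φ' : ℝ → ℝ)
    (hmono : StrictMonoOn φ (Set.Icc 0 1))
    (hcont : ContinuousOn φ (Set.Icc 0 1))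
    (hbij : Set.BijOn φ (Set.Icc (0 : ℝ) 1) (Set.Icc (0 : ℝ) 1))
    (hφ0 : φ 0 = 0) (hφ1 : φ 1 = 1)
    (hder : ∀ t ∈ Set.Icc (0 : ℝ) 1, HasDerivWithinAt φ (φ' t) (Set.Icc 0 1) t)
    (hbd : ∃ M, ∀ t ∈ Set.Icc (0 : ℝ) 1, |φ' t| ≤ M)
    (D : Set ℝ) (hD : D ⊆ Set.Icc 0 1) (hDdense : Set.Icc (0 : ℝ) 1 ⊆ closure D)
    (hD0 : ∀ t ∈ D, φ' t = 0)
    (f : ℝ → ℝ)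
    (hf : RiemannIntegrableOn f (Set.Icc 0 1))
    (hprod : RiemannIntegrableOn (fun t => f (φ t) * φ' t) (Set.Icc 0 1)) :
    0 < volume {x ∈ Set.Icc (0 : ℝ) 1 | f x = 0} :=
  stmt19_general φ φ' hmono hbij hφ0 hφ1 hder D hD hDdense hD0 f hprod
end
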